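/- arXiv:2009.13336 — 5 statements merged into one kernel-verified Lean document; each statement's English description precedes it below -/
import Mathlib

section
/- Let V : ℝ → ℝ be smooth and suppose there exist η > 0, α > 0, L₀ ≥ 1 with V(q) ≥ η|q|^α for |q| ≥ L₀. Define Z_{ν,1} = √(π/ν) ∫_ℝ e^{-2ν V(q)} dq. Then lim_{ν→∞} (1/ν) ln Z_{ν,1} = -2 inf_{q∈ℝ} V(q). -/
open Filter MeasureTheory Real

lemma exp_neg_integrable (V : ℝ → ℝ) (hVc : Continuous V) (η α L₀ : ℝ)
    (hη : 0 < η) (hα : 0 < α) (hL₀ : 1 ≤ L₀)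
    (hgrowth : ∀ q : ℝ, L₀ ≤ |q| → η * |q| ^ α ≤ V q)
    (c : ℝ) (hc : 0 < c) :
    Integrable (fun q : ℝ => Real.exp (-c * V q)) := by
  obtain ⟨n, hn⟩ := exists_nat_ge (2 / α)
  have hn2 : 2 ≤ (n : ℝ) * α := by
    rw [div_le_iff₀ hα] at hn; linarith
  set b := c * η with hb
  have hbpos : 0 < b := mul_pos hc hη
  have hL₀pos : (0:ℝ) < L₀ := by linarith
  have hne : (Set.Icc (-L₀) L₀).Nonempty := ⟨0, by constructor <;> linarith⟩
  have hcont : Continuous fun q : ℝ => Real.exp (-c * V q) :=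
    Real.continuous_exp.comp (continuous_const.mul hVc)
  obtain ⟨x₀, -, hx₀⟩ := isCompact_Icc.exists_isMaxOn hne hcont.continuousOn
  set S := Real.exp (-c * V x₀) with hS
  have hSpos : 0 < S := Real.exp_pos _
  set M := max (2 * (n.factorial : ℝ) / b ^ n) (S * (1 + L₀ ^ 2)) with hM
  have hg : Integrable (fun q : ℝ => M * (1 + q ^ 2)⁻¹) :=
    integrable_inv_one_add_sq.const_mul M
  refine hg.mono' hcont.aestronglyMeasurable (Filter.Eventually.of_forall fun q => ?_)
  rw [Real.norm_of_nonneg (Real.exp_pos _).le]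
  have hq2 : (0:ℝ) < 1 + q ^ 2 := by positivity
  by_cases hcase : L₀ ≤ |q|
  · have h1q : (1:ℝ) ≤ |q| := le_trans hL₀ hcase
    have h1 : b * |q| ^ α ≤ c * V q := by
      have := mul_le_mul_of_nonneg_left (hgrowth q hcase) hc.le
      calc b * |q| ^ α = c * (η * |q| ^ α) := by ring
        _ ≤ c * V q := this
    have hxnn : 0 ≤ b * |q| ^ α := by positivity
    have h2 : (b * |q| ^ α) ^ n / (n.factorial : ℝ) ≤ Real.exp (b * |q| ^ α) :=
      Real.pow_div_factorial_le_exp _ hxnn n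
    have hqpow : q ^ 2 ≤ (|q| ^ α) ^ n := by
      have e1 : (|q| ^ α) ^ n = |q| ^ (α * n) := by
        rw [← Real.rpow_natCast (|q| ^ α) n, ← Real.rpow_mul (abs_nonneg q)]
      have e2 : |q| ^ ((2:ℕ):ℝ) ≤ |q| ^ (α * n) :=
        Real.rpow_le_rpow_of_exponent_le h1q (by push_cast; linarith)
      rw [Real.rpow_natCast] at e2
      rw [e1]
      calc q ^ 2 = |q| ^ 2 := (sq_abs q).symm
        _ ≤ _ := e2
    have hq1 : (1:ℝ) ≤ q ^ 2 := by nlinarith [sq_abs q]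
    have key : 1 + q ^ 2 ≤ 2 * (|q| ^ α) ^ n := by nlinarith
    have hexp : b ^ n * (|q| ^ α) ^ n / (n.factorial : ℝ) ≤ Real.exp (b * |q| ^ α) := by
      rw [← mul_pow] at *; exact h2
    have hfinal : Real.exp (-c * V q) ≤ 2 * (n.factorial : ℝ) / b ^ n * (1 + q ^ 2)⁻¹ := by
      have hle : Real.exp (-c * V q) ≤ Real.exp (-(b * |q| ^ α)) := by
        rw [Real.exp_le_exp]; linarith
      have hexpinv : Real.exp (-(b * |q| ^ α)) = (Real.exp (b * |q| ^ α))⁻¹ := by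
        rw [Real.exp_neg]
      rw [hexpinv] at hle
      refine hle.trans ?_
      have hEpos : 0 < Real.exp (b * |q| ^ α) := Real.exp_pos _
      have hfac : (0:ℝ) < (n.factorial : ℝ) := by positivity
      have hbn : (0:ℝ) < b ^ n := by positivity
      have h5 : b ^ n * (|q| ^ α) ^ n ≤ (n.factorial : ℝ) * Real.exp (b * |q| ^ α) := by
        rw [div_le_iff₀ hfac] at hexp; linarith
      have h3 : b ^ n * (1 + q ^ 2) ≤ 2 * (n.factorial : ℝ) * Real.exp (b * |q| ^ α) := by
        nlinarith
      rw [show ((2:ℝ) * (n.factorial : ℝ) / b ^ n) * (1 + q ^ 2)⁻¹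
            = (2 * (n.factorial : ℝ)) / (b ^ n * (1 + q ^ 2)) from by field_simp,
          inv_eq_one_div, div_le_div_iff₀ hEpos (by positivity)]
      nlinarith
    exact hfinal.trans (mul_le_mul_of_nonneg_right (le_max_left _ _) (by positivity))
  · push_neg at hcase
    have hmem : q ∈ Set.Icc (-L₀) L₀ := by
      rw [Set.mem_Icc, ← abs_le]; exact hcase.le
    have h1 : Real.exp (-c * V q) ≤ S := hx₀ hmem
    have h2 : 1 + q ^ 2 ≤ 1 + L₀ ^ 2 := by nlinarith [sq_abs q, abs_nonneg q]
    have h3 : S ≤ S * (1 + L₀ ^ 2) * (1 + q ^ 2)⁻¹ := by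
      rw [mul_assoc, le_mul_iff_one_le_right hSpos, ← div_eq_mul_inv, le_div_iff₀ hq2]
      linarith
    exact (h1.trans h3).trans (mul_le_mul_of_nonneg_right (le_max_right _ _) (by positivity))

theorem normalizing_constant_limit
    (V : ℝ → ℝ) (hV : ContDiff ℝ (⊤ : ℕ∞) V) (η α L₀ : ℝ)
    (hη : 0 < η) (hα : 0 < α) (hL₀ : 1 ≤ L₀)
    (hgrowth : ∀ q : ℝ, L₀ ≤ |q| → η * |q| ^ α ≤ V q) :
    Tendsto (fun ν : ℝ =>
        (1 / ν) * Real.log (Real.sqrt (Real.pi / ν) * ∫ q : ℝ, Real.exp (-2 * ν * V q)))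
      atTop (nhds (-2 * ⨅ q : ℝ, V q)) := by
  have hVc : Continuous V := hV.continuous
  have hL₀pos : (0:ℝ) < L₀ := by linarith
  obtain ⟨x₀, -, hx₀⟩ := isCompact_Icc.exists_isMinOn
    (⟨0, by constructor <;> linarith⟩ : (Set.Icc (-L₀) L₀).Nonempty) hVc.continuousOn
  have hbdd : BddBelow (Set.range V) := by
    refine ⟨min (V x₀) 0, ?_⟩
    rintro y ⟨q, rfl⟩
    by_cases h : L₀ ≤ |q|
    · have h1 := hgrowth q h
      have hnn : 0 ≤ η * |q| ^ α := by positivity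
      exact le_trans (min_le_right _ _) (le_trans hnn h1)
    · push_neg at h
      have : q ∈ Set.Icc (-L₀) L₀ := by rw [Set.mem_Icc, ← abs_le]; exact h.le
      exact le_trans (min_le_left _ _) (hx₀ this)
  set m := ⨅ q : ℝ, V q with hm
  have hmle : ∀ q, m ≤ V q := fun q => ciInf_le hbdd q
  set C := ∫ q : ℝ, Real.exp (-2 * V q) with hC
  have hint : ∀ c : ℝ, 0 < c → Integrable (fun q : ℝ => Real.exp (-c * V q)) :=
    fun c hc => exp_neg_integrable V hVc η α L₀ hη hα hL₀ hgrowth c hc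
  have hpos : ∀ c : ℝ, 0 < c → 0 < ∫ q : ℝ, Real.exp (-c * V q) := by
    intro c hc
    rw [integral_pos_iff_support_of_nonneg (fun q => (Real.exp_pos _).le) (hint c hc)]
    have hs : Function.support (fun q : ℝ => Real.exp (-c * V q)) = Set.univ :=
      Set.eq_univ_of_forall fun q => (Real.exp_pos _).ne'
    rw [hs]
    simp [Real.volume_univ]
  have hCpos : 0 < C := by
    have := hpos 2 two_pos
    simpa [hC] using this
  set I : ℝ → ℝ := fun ν => ∫ q : ℝ, Real.exp (-2 * ν * V q) with hIdef
  have hfuneq : ∀ ν : ℝ, (fun q : ℝ => Real.exp (-2 * ν * V q))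
      = fun q : ℝ => Real.exp (-(2 * ν) * V q) := by
    intro ν; funext q; congr 1; ring
  have hIint : ∀ ν : ℝ, 0 < ν → Integrable (fun q : ℝ => Real.exp (-2 * ν * V q)) := by
    intro ν hν; rw [hfuneq ν]; exact hint (2 * ν) (by positivity)
  have hIpos : ∀ ν : ℝ, 0 < ν → 0 < I ν := by
    intro ν hν; rw [hIdef]; simp only; rw [hfuneq ν]; exact hpos (2 * ν) (by positivity)
  -- upper bound
  have hupper : ∀ ν : ℝ, 1 ≤ ν → I ν ≤ Real.exp (-2 * (ν - 1) * m) * C := by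
    intro ν hν
    have hν0 : (0:ℝ) < ν := by linarith
    have h1 : Integrable (fun q : ℝ => Real.exp (-2 * (ν - 1) * m) * Real.exp (-2 * V q)) :=
      (hint 2 two_pos).const_mul _
    have hle : ∀ q, Real.exp (-2 * ν * V q)
        ≤ Real.exp (-2 * (ν - 1) * m) * Real.exp (-2 * V q) := by
      intro q
      rw [← Real.exp_add]
      apply Real.exp_le_exp.2
      nlinarith [mul_nonneg (sub_nonneg.2 hν) (sub_nonneg.2 (hmle q))]
    calc I ν ≤ ∫ q : ℝ, Real.exp (-2 * (ν - 1) * m) * Real.exp (-2 * V q) :=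
        integral_mono (hIint ν hν0) h1 hle
      _ = Real.exp (-2 * (ν - 1) * m) * C := by rw [integral_const_mul]
  have hlogup : ∀ ν : ℝ, 1 ≤ ν →
      (1/ν) * Real.log (I ν) ≤ -2 * m + (2 * m + Real.log C) / ν := by
    intro ν hν
    have hν0 : (0:ℝ) < ν := by linarith
    have h1 : Real.log (I ν) ≤ -2 * (ν - 1) * m + Real.log C := by
      have h2 := Real.log_le_log (hIpos ν hν0) (hupper ν hν)
      rwa [Real.log_mul (Real.exp_ne_zero _) (ne_of_gt hCpos), Real.log_exp] at h2
    calc (1/ν) * Real.log (I ν) ≤ (1/ν) * (-2 * (ν - 1) * m + Real.log C) :=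
        mul_le_mul_of_nonneg_left h1 (by positivity)
      _ = -2 * m + (2 * m + Real.log C) / ν := by field_simp; ring
  -- lower bound
  have hlower : ∀ ε : ℝ, 0 < ε → ∃ δ : ℝ, 0 < δ ∧ ∀ ν : ℝ, 1 ≤ ν →
      Real.log δ / ν - 2 * (m + ε) ≤ (1/ν) * Real.log (I ν) := by
    intro ε hε
    obtain ⟨q₀, hq₀⟩ := exists_lt_of_ciInf_lt (show m < m + ε by linarith)
    have hopen : {x : ℝ | V x < m + ε} ∈ nhds q₀ :=
      (isOpen_lt hVc continuous_const).mem_nhds hq₀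
    obtain ⟨r, hr0, hball⟩ := Metric.mem_nhds_iff.1 hopen
    refine ⟨r/2, by linarith, ?_⟩
    intro ν hν
    have hν0 : (0:ℝ) < ν := by linarith
    set s : Set ℝ := Set.Icc (q₀ - r/4) (q₀ + r/4) with hsdef
    have hsub : ∀ x ∈ s, V x < m + ε := by
      intro x hx
      apply hball
      rw [Metric.mem_ball, Real.dist_eq]
      rw [Set.mem_Icc] at hx
      rw [abs_lt]; constructor <;> linarith [hx.1, hx.2]
    have hvol : (volume s).toReal = r/2 := by
      rw [hsdef, Real.volume_Icc, ENNReal.toReal_ofReal (by linarith)]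
      ring_nf
    have hstep1 : ∫ q in s, Real.exp (-2 * ν * V q) ≤ I ν :=
      setIntegral_le_integral (hIint ν hν0)
        (Filter.Eventually.of_forall fun q => (Real.exp_pos _).le)
    have hstep2 : (r/2) * Real.exp (-2 * ν * (m + ε))
        ≤ ∫ q in s, Real.exp (-2 * ν * V q) := by
      have hc : IntegrableOn (fun _ : ℝ => Real.exp (-2 * ν * (m + ε))) s :=
        integrableOn_const measure_Icc_lt_top.ne enorm_ne_top
      have hmono := setIntegral_mono_on hc ((hIint ν hν0).integrableOn)
        measurableSet_Icc (fun x hx => by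
          apply Real.exp_le_exp.2
          nlinarith [hsub x hx])
      rw [setIntegral_const, measureReal_def, hvol] at hmono
      simpa [smul_eq_mul] using hmono
    have hIlow : (r/2) * Real.exp (-2 * ν * (m + ε)) ≤ I ν := le_trans hstep2 hstep1
    have hlog : Real.log (r/2) + (-2 * ν * (m + ε)) ≤ Real.log (I ν) := by
      have h2 := Real.log_le_log (by positivity) hIlow
      rwa [Real.log_mul (by positivity) (Real.exp_ne_zero _), Real.log_exp] at h2
    calc Real.log (r/2) / ν - 2 * (m + ε)
        = (1/ν) * (Real.log (r/2) + (-2 * ν * (m + ε))) := by field_simp; ring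
      _ ≤ (1/ν) * Real.log (I ν) := mul_le_mul_of_nonneg_left hlog (by positivity)
  -- tendsto of the integral part
  have hg : Tendsto (fun ν : ℝ => (1/ν) * Real.log (I ν)) atTop (nhds (-2 * m)) := by
    rw [tendsto_order]
    constructor
    · intro a ha
      set ε := (-2 * m - a) / 8 with hεdef
      have hε : 0 < ε := by rw [hεdef]; linarith
      obtain ⟨δ, hδ, hbound⟩ := hlower ε hε
      have hδν : Tendsto (fun ν : ℝ => Real.log δ / ν) atTop (nhds 0) :=
        tendsto_const_nhds.div_atTop tendsto_id
      have hev : ∀ᶠ ν in atTop, -((-2 * m - a)/2) < Real.log δ / ν :=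
        hδν.eventually (eventually_gt_nhds (show -((-2 * m - a)/2) < 0 by linarith))
      filter_upwards [hev, eventually_ge_atTop 1] with ν h1 h2
      have h3 := hbound ν h2
      rw [hεdef] at h3
      linarith
    · intro a ha
      have hq : Tendsto (fun ν : ℝ => (2 * m + Real.log C) / ν) atTop (nhds 0) :=
        tendsto_const_nhds.div_atTop tendsto_id
      have hev : ∀ᶠ ν in atTop, (2 * m + Real.log C) / ν < a - (-2 * m) :=
        hq.eventually (eventually_lt_nhds (show (0:ℝ) < a - (-2 * m) by linarith))
      filter_upwards [hev, eventually_ge_atTop 1] with ν h1 h2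
      have h3 := hlogup ν h2
      linarith
  -- tendsto of the sqrt part
  have hh : Tendsto (fun ν : ℝ => (1/ν) * Real.log (Real.sqrt (Real.pi / ν)))
      atTop (nhds 0) := by
    have T1 : Tendsto (fun ν : ℝ => Real.log Real.pi / ν) atTop (nhds 0) :=
      tendsto_const_nhds.div_atTop tendsto_id
    have T2 : Tendsto (fun ν : ℝ => Real.log ν / ν) atTop (nhds 0) :=
      Real.isLittleO_log_id_atTop.tendsto_div_nhds_zero
    have T : Tendsto (fun ν : ℝ => (1/2) * (Real.log Real.pi / ν - Real.log ν / ν))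
        atTop (nhds 0) := by
      have h := (T1.sub T2).const_mul (1/2 : ℝ)
      simpa using h
    apply T.congr'
    filter_upwards [eventually_gt_atTop 0] with ν hν
    rw [Real.log_sqrt (by positivity), Real.log_div (ne_of_gt Real.pi_pos) (ne_of_gt hν)]
    ring
  have hsum := hh.add hg
  rw [zero_add] at hsum
  apply hsum.congr'
  filter_upwards [eventually_ge_atTop 1] with ν hν
  have hν0 : (0:ℝ) < ν := by linarith
  rw [Real.log_mul (ne_of_gt (Real.sqrt_pos.2 (by positivity))) (ne_of_gt (hIpos ν hν0))]
  ring
end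

section
/- Let V : ℝ → ℝ be smooth with V(q) ≥ η|q|^α for |q| ≥ L₀ (η, α > 0, L₀ ≥ 1), and let μ_{ν,1} be the probability measure on ℝ² with density Z_{ν,1}^{-1} e^{-ν(p² + 2V(q))}. Set I(p,q) = p² + 2V(q) and Z₀ = -2 inf V. Then for every open set U ⊆ ℝ², liminf_{ν→∞} (1/ν) ln μ_{ν,1}(U) ≥ -inf_{(p,q)∈U} (I(p,q) + Z₀). -/
open Filter MeasureTheory Real Set

lemma bddBelowV (V : ℝ → ℝ) (hV : Continuous V) (η α L₀ : ℝ)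
    (hη : 0 < η) (hL₀ : 1 ≤ L₀)
    (hgrowth : ∀ q : ℝ, L₀ ≤ |q| → η * |q| ^ α ≤ V q) :
    BddBelow (Set.range V) := by
  obtain ⟨q₀, hq₀, hmin⟩ := isCompact_Icc.exists_isMinOn (Set.nonempty_Icc.2 (by linarith : -L₀ ≤ L₀)) (hV.continuousOn (s := Icc (-L₀) L₀))
  refine ⟨min (V q₀) 0, ?_⟩
  rintro x ⟨q, rfl⟩
  rcases le_or_gt |q| L₀ with h | h
  · have : q ∈ Icc (-L₀) L₀ := abs_le.mp h
    exact le_trans (min_le_left _ _) (hmin this)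
  · refine le_trans (min_le_right _ _) (le_trans ?_ (hgrowth q h.le))
    positivity

lemma integrable_exp_negV (V : ℝ → ℝ) (hV : Continuous V) (η α L₀ : ℝ)
    (hη : 0 < η) (hα : 0 < α) (hL₀ : 1 ≤ L₀)
    (hgrowth : ∀ q : ℝ, L₀ ≤ |q| → η * |q| ^ α ≤ V q)
    (c : ℝ) (hc : 0 < c) :
    Integrable (fun q : ℝ => Real.exp (-(c * V q))) := by
  have hcont : Continuous fun q : ℝ => Real.exp (-(c * V q)) :=
    ((continuous_const.mul hV).neg).rexp
  -- choose L₁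
  have hlo := (isLittleO_log_rpow_atTop hα).def (show (0:ℝ) < c * η / 2 by positivity)
  rw [eventually_atTop] at hlo
  obtain ⟨L', hL'⟩ := hlo
  set L₁ : ℝ := max L' (max L₀ 1) with hL₁def
  have hL₁1 : (1:ℝ) ≤ L₁ := le_trans (le_max_right _ _) (le_max_right _ _)
  have hL₁0 : (0:ℝ) < L₁ := by linarith
  have hL₁L₀ : L₀ ≤ L₁ := le_trans (le_max_left _ _) (le_max_right _ _)
  have key : ∀ q : ℝ, L₁ ≤ |q| → Real.exp (-(c * V q)) ≤ |q| ^ (-2 : ℝ) := by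
    intro q hq
    have h1 : (1:ℝ) ≤ |q| := le_trans hL₁1 hq
    have h0 : (0:ℝ) < |q| := by linarith
    have hVq : η * |q| ^ α ≤ V q := hgrowth q (le_trans hL₁L₀ hq)
    have hlog : 2 * Real.log |q| ≤ c * (η * |q| ^ α) := by
      have := hL' |q| (le_trans (le_max_left _ _) hq)
      rw [Real.norm_eq_abs, Real.norm_eq_abs, abs_of_nonneg (Real.log_nonneg h1),
        abs_of_nonneg (Real.rpow_nonneg h0.le _)] at this
      nlinarith
    rw [Real.rpow_def_of_pos h0]
    apply Real.exp_le_exp.2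
    have : c * (η * |q| ^ α) ≤ c * V q := by nlinarith
    nlinarith [Real.log_nonneg h1]
  -- split
  rw [← integrableOn_univ,
    show (univ : Set ℝ) = Iic (-L₁) ∪ (Icc (-L₁) L₁ ∪ Ici L₁) by
      ext x; simp only [mem_univ, mem_union, mem_Iic, mem_Icc, mem_Ici, true_iff]
      rcases le_total x (-L₁) with h | h
      · exact Or.inl h
      · rcases le_total x L₁ with h2 | h2
        · exact Or.inr (Or.inl ⟨h, h2⟩)
        · exact Or.inr (Or.inr h2),
    integrableOn_union, integrableOn_union]
  have hIoi : IntegrableOn (fun x : ℝ => x ^ (-2 : ℝ)) (Ioi L₁) :=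
    integrableOn_Ioi_rpow_of_lt (by norm_num) hL₁0
  refine ⟨?_, hcont.integrableOn_Icc, ?_⟩
  · rw [← (Measure.measurePreserving_neg (volume : Measure ℝ)).integrableOn_comp_preimage
      (Homeomorph.neg ℝ).measurableEmbedding]
    simp only [Function.comp_def, neg_preimage, neg_Iic, neg_neg]
    rw [integrableOn_Ici_iff_integrableOn_Ioi]
    apply Integrable.mono' hIoi (hcont.comp continuous_neg).aestronglyMeasurable
    filter_upwards [ae_restrict_mem (measurableSet_Ioi : MeasurableSet (Ioi L₁))] with x hx
    have hx0 : 0 < x := lt_of_lt_of_le hL₁0 (le_of_lt hx)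
    have : |(-x)| = x := by rw [abs_neg, abs_of_pos hx0]
    simp only [Function.comp_apply]
    rw [Real.norm_eq_abs, abs_of_pos (Real.exp_pos _)]
    calc Real.exp (-(c * V (-x))) ≤ |(-x)| ^ (-2:ℝ) := key (-x) (by rw [this]; exact le_of_lt hx)
      _ = x ^ (-2:ℝ) := by rw [this]
  · rw [integrableOn_Ici_iff_integrableOn_Ioi]
    apply Integrable.mono' hIoi hcont.aestronglyMeasurable
    filter_upwards [ae_restrict_mem (measurableSet_Ioi : MeasurableSet (Ioi L₁))] with x hx
    have hx0 : 0 < x := lt_of_lt_of_le hL₁0 (le_of_lt hx)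
    rw [Real.norm_eq_abs, abs_of_pos (Real.exp_pos _)]
    calc Real.exp (-(c * V x)) ≤ |x| ^ (-2:ℝ) := key x (by rw [abs_of_pos hx0]; exact le_of_lt hx)
      _ = x ^ (-2:ℝ) := by rw [abs_of_pos hx0]

/-- The Gibbs measure `μ_{ν,1}` on `ℝ²` with density `Z_{ν,1}⁻¹ e^{-ν(p² + 2 V(q))}`. -/
noncomputable def gibbsMeasure (V : ℝ → ℝ) (ν : ℝ) : Measure (ℝ × ℝ) :=
  volume.withDensity fun x : ℝ × ℝ =>
    ENNReal.ofReal
      ((∫ y : ℝ × ℝ, Real.exp (-ν * (y.1 ^ 2 + 2 * V y.2)))⁻¹ *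
        Real.exp (-ν * (x.1 ^ 2 + 2 * V x.2)))

theorem ldp_lower_bound_open
    (V : ℝ → ℝ) (hV : ContDiff ℝ (⊤ : ℕ∞) V) (η α L₀ : ℝ)
    (hη : 0 < η) (hα : 0 < α) (hL₀ : 1 ≤ L₀)
    (hgrowth : ∀ q : ℝ, L₀ ≤ |q| → η * |q| ^ α ≤ V q)
    (U : Set (ℝ × ℝ)) (hU : IsOpen U) :
    -sInf ((fun x : ℝ × ℝ => x.1 ^ 2 + 2 * V x.2 + (-2 * ⨅ q : ℝ, V q)) '' U) ≤
      liminf (fun ν : ℝ => (1 / ν) * Real.log (gibbsMeasure V ν U).toReal) atTop := by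
  have hVc : Continuous V := hV.continuous
  have hbdd : BddBelow (Set.range V) := bddBelowV V hVc η α L₀ hη hL₀ hgrowth
  set m : ℝ := ⨅ q : ℝ, V q with hmdef
  have hm : ∀ q, m ≤ V q := fun q => ciInf_le hbdd q
  rcases U.eq_empty_or_nonempty with rfl | hUne
  · simp only [Set.image_empty, Real.sInf_empty, neg_zero, measure_empty,
      ENNReal.toReal_zero, Real.log_zero, mul_zero, liminf_const]
    exact le_refl 0
  set L : ℝ := liminf (fun ν : ℝ => (1 / ν) * Real.log ((gibbsMeasure V ν) U).toReal) atTop with hLdef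
  have hCint : Integrable (fun q : ℝ => Real.exp (-(2 * V q))) :=
    integrable_exp_negV V hVc η α L₀ hη hα hL₀ hgrowth 2 two_pos
  set C : ℝ := ∫ q : ℝ, Real.exp (-(2 * V q)) with hCdef
  have hCpos : 0 < C := by
    rw [hCdef, integral_pos_iff_support_of_nonneg (fun q => (Real.exp_pos _).le) hCint]
    have : (Function.support fun q : ℝ => Real.exp (-(2 * V q))) = Set.univ := by
      ext q; simp [Function.support, Real.exp_ne_zero]
    rw [this]
    simp
  have hπ : (0:ℝ) < Real.sqrt Real.pi := Real.sqrt_pos.2 Real.pi_pos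
  set A : ℝ := Real.sqrt Real.pi * C * Real.exp (2 * m) with hAdef
  have hApos : 0 < A := by positivity
  suffices key : ∀ x₀ ∈ U, ∀ δ : ℝ, 0 < δ →
      -(x₀.1 ^ 2 + 2 * V x₀.2 + (-2 * m)) - δ ≤ L by
    rw [neg_le]
    refine le_csInf (hUne.image _) ?_
    rintro b ⟨x₀, hx₀, rfl⟩
    rw [neg_le]
    refine le_of_forall_pos_le_add ?_
    intro δ hδ
    have h := key x₀ hx₀ δ hδ
    show -(x₀.1 ^ 2 + 2 * V x₀.2 + -2 * m) ≤ L + δ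
    linarith
  intro x₀ hx₀ δ hδ
  -- choose a ball inside U on which I is close to I x₀
  obtain ⟨r₁, hr₁, hball₁⟩ := Metric.isOpen_iff.1 hU x₀ hx₀
  have hIc : Continuous fun x : ℝ × ℝ => x.1 ^ 2 + 2 * V x.2 := by
    exact ((continuous_fst.pow 2).add ((continuous_const.mul (hVc.comp continuous_snd))))
  have hev : ∀ᶠ x in nhds x₀, x.1 ^ 2 + 2 * V x.2 < x₀.1 ^ 2 + 2 * V x₀.2 + δ :=
    (hIc.tendsto x₀).eventually_lt_const (lt_add_of_pos_right _ hδ)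
  obtain ⟨r₂, hr₂, h2⟩ := Metric.eventually_nhds_iff.1 hev
  set r : ℝ := min r₁ r₂ with hrdef
  have hr : 0 < r := lt_min hr₁ hr₂
  set B : Set (ℝ × ℝ) := Metric.ball x₀ r with hBdef
  have hBU : B ⊆ U := fun x hx => hball₁ (Metric.ball_subset_ball (min_le_left _ _) hx)
  have hIB : ∀ x ∈ B, x.1 ^ 2 + 2 * V x.2 ≤ x₀.1 ^ 2 + 2 * V x₀.2 + δ := by
    intro x hx
    exact (h2 (lt_of_lt_of_le hx (min_le_right _ _))).le
  set volB : ℝ := (volume B).toReal with hvolBdef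
  have hvolB : 0 < volB :=
    ENNReal.toReal_pos (Metric.measure_ball_pos volume x₀ hr).ne' measure_ball_lt_top.ne
  -- the eventual lower bound
  have hmain : ∀ᶠ ν : ℝ in atTop,
      (1 / ν) * (Real.log volB - Real.log A) + (2 * m - (x₀.1 ^ 2 + 2 * V x₀.2) - δ) ≤
        (1 / ν) * Real.log ((gibbsMeasure V ν) U).toReal ∧
        (1 / ν) * Real.log ((gibbsMeasure V ν) U).toReal ≤ 0 := by
    filter_upwards [eventually_ge_atTop 1] with ν hν
    have hν0 : (0:ℝ) < ν := lt_of_lt_of_le one_pos hν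
    have hgauss : Integrable (fun p : ℝ => Real.exp (-ν * p ^ 2)) := integrable_exp_neg_mul_sq hν0
    have hGq : Integrable (fun q : ℝ => Real.exp (-(2 * ν * V q))) :=
      integrable_exp_negV V hVc η α L₀ hη hα hL₀ hgrowth (2 * ν) (by positivity)
    have hprod : Integrable (fun y : ℝ × ℝ => Real.exp (-ν * (y.1 ^ 2 + 2 * V y.2))) := by
      have h := hgauss.mul_prod hGq
      rw [show (volume : Measure (ℝ × ℝ)) = (volume : Measure ℝ).prod volume from Measure.volume_eq_prod ℝ ℝ]
      refine h.congr ?_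
      filter_upwards with y
      rw [← Real.exp_add]; ring_nf
    set Zν : ℝ := ∫ y : ℝ × ℝ, Real.exp (-ν * (y.1 ^ 2 + 2 * V y.2)) with hZdef
    have hZeq : Zν = (∫ p : ℝ, Real.exp (-ν * p ^ 2)) * ∫ q : ℝ, Real.exp (-(2 * ν * V q)) := by
      rw [hZdef, show (volume : Measure (ℝ × ℝ)) = (volume : Measure ℝ).prod volume from
        Measure.volume_eq_prod ℝ ℝ, ← integral_prod_mul]
      congr 1; funext y; rw [← Real.exp_add]; ring_nf
    have hGqpos : 0 < ∫ q : ℝ, Real.exp (-(2 * ν * V q)) := by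
      rw [integral_pos_iff_support_of_nonneg (fun q => (Real.exp_pos _).le) hGq]
      have : (Function.support fun q : ℝ => Real.exp (-(2 * ν * V q))) = Set.univ := by
        ext q; simp [Function.support, Real.exp_ne_zero]
      rw [this]; simp
    have hGppos : 0 < ∫ p : ℝ, Real.exp (-ν * p ^ 2) := by
      rw [integral_gaussian]
      exact Real.sqrt_pos.2 (div_pos Real.pi_pos hν0)
    have hZpos : 0 < Zν := by rw [hZeq]; exact mul_pos hGppos hGqpos
    -- upper bound on Zν
    have hZle : Zν ≤ A * Real.exp (-(2 * ν * m)) := by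
      have h1 : (∫ p : ℝ, Real.exp (-ν * p ^ 2)) ≤ Real.sqrt Real.pi := by
        rw [integral_gaussian]
        exact Real.sqrt_le_sqrt (div_le_self Real.pi_pos.le hν)
      have h2' : (∫ q : ℝ, Real.exp (-(2 * ν * V q))) ≤
          Real.exp (-(2 * (ν - 1) * m)) * C := by
        rw [hCdef, ← integral_const_mul]
        refine integral_mono hGq (hCint.const_mul _) ?_
        intro q
        dsimp only
        rw [← Real.exp_add]
        apply Real.exp_le_exp.2
        nlinarith [hm q]
      have h3 : A * Real.exp (-(2 * ν * m)) =
          Real.sqrt Real.pi * (Real.exp (-(2 * (ν - 1) * m)) * C) := by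
        rw [hAdef, show -(2 * (ν - 1) * m) = 2 * m + -(2 * ν * m) by ring, Real.exp_add]
        ring
      rw [hZeq]
      calc (∫ p : ℝ, Real.exp (-ν * p ^ 2)) * ∫ q : ℝ, Real.exp (-(2 * ν * V q))
          ≤ Real.sqrt Real.pi * (Real.exp (-(2 * (ν - 1) * m)) * C) :=
            mul_le_mul h1 h2' (le_of_lt hGqpos) hπ.le
        _ = A * Real.exp (-(2 * ν * m)) := h3.symm
    -- measure of U
    have hμU : ((gibbsMeasure V ν) U).toReal =
        Zν⁻¹ * ∫ x in U, Real.exp (-ν * (x.1 ^ 2 + 2 * V x.2)) := by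
      rw [gibbsMeasure, withDensity_apply _ hU.measurableSet]
      rw [← ofReal_integral_eq_lintegral_ofReal ((hprod.const_mul _).integrableOn)
        (Filter.Eventually.of_forall fun x => by positivity)]
      rw [ENNReal.toReal_ofReal (by positivity), integral_const_mul]
    -- lower bound on the set integral
    set S : ℝ := ∫ x in U, Real.exp (-ν * (x.1 ^ 2 + 2 * V x.2)) with hSdef
    have hSB : volB * Real.exp (-ν * (x₀.1 ^ 2 + 2 * V x₀.2 + δ)) ≤ S := by
      have h1 : Real.exp (-ν * (x₀.1 ^ 2 + 2 * V x₀.2 + δ)) * (volume B).toReal ≤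
          ∫ x in B, Real.exp (-ν * (x.1 ^ 2 + 2 * V x.2)) := by
        rw [mul_comm]
        show (volume : Measure (ℝ × ℝ)).real B • Real.exp (-ν * (x₀.1 ^ 2 + 2 * V x₀.2 + δ)) ≤ _
        refine setIntegral_ge_of_const_le Metric.isOpen_ball.measurableSet
          measure_ball_lt_top.ne (fun x hx => ?_) hprod.integrableOn
        apply Real.exp_le_exp.2
        have := hIB x hx
        nlinarith
      have h2' : (∫ x in B, Real.exp (-ν * (x.1 ^ 2 + 2 * V x.2))) ≤ S := by
        refine setIntegral_mono_set hprod.integrableOn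
          (Filter.Eventually.of_forall fun x => (Real.exp_pos _).le)
          (Filter.Eventually.of_forall hBU)
      calc volB * Real.exp (-ν * (x₀.1 ^ 2 + 2 * V x₀.2 + δ))
          = Real.exp (-ν * (x₀.1 ^ 2 + 2 * V x₀.2 + δ)) * (volume B).toReal := by
            rw [hvolBdef]; ring
        _ ≤ _ := le_trans h1 h2'
    have hSpos : 0 < S := lt_of_lt_of_le (by positivity) hSB
    have hμpos : 0 < ((gibbsMeasure V ν) U).toReal := by
      rw [hμU]; positivity
    -- log estimates
    have hlogZ : Real.log Zν ≤ Real.log A + (-(2 * ν * m)) := by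
      calc Real.log Zν ≤ Real.log (A * Real.exp (-(2 * ν * m))) :=
            Real.log_le_log hZpos hZle
        _ = Real.log A + (-(2 * ν * m)) := by
            rw [Real.log_mul hApos.ne' (Real.exp_pos _).ne', Real.log_exp]
    have hlogS : Real.log volB + (-ν * (x₀.1 ^ 2 + 2 * V x₀.2 + δ)) ≤ Real.log S := by
      calc Real.log volB + (-ν * (x₀.1 ^ 2 + 2 * V x₀.2 + δ))
          = Real.log (volB * Real.exp (-ν * (x₀.1 ^ 2 + 2 * V x₀.2 + δ))) := by
            rw [Real.log_mul hvolB.ne' (Real.exp_pos _).ne', Real.log_exp]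
        _ ≤ Real.log S := Real.log_le_log (by positivity) hSB
    have hlogμ : Real.log volB + (-ν * (x₀.1 ^ 2 + 2 * V x₀.2 + δ)) -
        (Real.log A + (-(2 * ν * m))) ≤ Real.log ((gibbsMeasure V ν) U).toReal := by
      rw [hμU, Real.log_mul (inv_ne_zero hZpos.ne') hSpos.ne', Real.log_inv]
      linarith
    constructor
    · calc (1 / ν) * (Real.log volB - Real.log A) + (2 * m - (x₀.1 ^ 2 + 2 * V x₀.2) - δ)
          = (1 / ν) * (Real.log volB + (-ν * (x₀.1 ^ 2 + 2 * V x₀.2 + δ)) -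
              (Real.log A + (-(2 * ν * m)))) := by
            field_simp
            ring
        _ ≤ (1 / ν) * Real.log ((gibbsMeasure V ν) U).toReal :=
            mul_le_mul_of_nonneg_left hlogμ (by positivity)
    · have hμ1 : ((gibbsMeasure V ν) U).toReal ≤ 1 := by
        rw [hμU]
        have hSZ : S ≤ Zν := by
          rw [hZdef, hSdef]
          exact setIntegral_le_integral hprod
            (Filter.Eventually.of_forall fun x => (Real.exp_pos _).le)
        rw [inv_mul_le_iff₀ hZpos, mul_one]
        exact hSZ
      have hlognp : Real.log ((gibbsMeasure V ν) U).toReal ≤ 0 :=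
        Real.log_nonpos hμpos.le hμ1
      have := mul_le_mul_of_nonneg_left hlognp (by positivity : (0:ℝ) ≤ 1 / ν)
      simpa using this
  -- pass to the liminf
  have hTend : Tendsto (fun ν : ℝ =>
      (1 / ν) * (Real.log volB - Real.log A) + (2 * m - (x₀.1 ^ 2 + 2 * V x₀.2) - δ)) atTop
      (nhds (2 * m - (x₀.1 ^ 2 + 2 * V x₀.2) - δ)) := by
    have h0 : Tendsto (fun ν : ℝ => 1 / ν) atTop (nhds 0) := by
      simpa only [one_div] using tendsto_inv_atTop_zero
    have := (h0.mul_const (Real.log volB - Real.log A)).add_const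
      (2 * m - (x₀.1 ^ 2 + 2 * V x₀.2) - δ)
    simpa using this
  have hbddf : IsBoundedUnder (· ≥ ·) atTop
      (fun ν : ℝ => (1 / ν) * Real.log ((gibbsMeasure V ν) U).toReal) := by
    obtain ⟨c, hc⟩ : ∃ c, ∀ᶠ ν : ℝ in atTop,
        c ≤ (1 / ν) * Real.log ((gibbsMeasure V ν) U).toReal := by
      refine ⟨2 * m - (x₀.1 ^ 2 + 2 * V x₀.2) - δ - 1, ?_⟩
      filter_upwards [hmain, hTend.eventually (eventually_gt_nhds
        (sub_one_lt (2 * m - (x₀.1 ^ 2 + 2 * V x₀.2) - δ)))] with ν h1 h2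
      have := h1.1
      linarith
    exact isBoundedUnder_of_eventually_ge hc
  have hcob := isCoboundedUnder_ge_of_eventually_le atTop (hmain.mono fun ν h => h.2)
  have h := liminf_le_liminf (hmain.mono fun ν h => h.1) hTend.isBoundedUnder_ge hcob
  rw [hTend.liminf_eq] at h
  rw [hLdef]
  linarith
end

section
/- Under the same hypotheses, the family {μ_{ν,1}}_{ν>0} is exponentially tight: with K_L = [-L,L]², limsup_{ν→∞} (1/ν) ln μ_{ν,1}(K_L^c) ≤ max{ -L²/2, -ηL^α - Z₀ } for all L ≥ L₀, and hence lim_{L→∞} limsup_{ν→∞} (1/ν) ln μ_{ν,1}(K_L^c) = -∞. -/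
open Filter MeasureTheory Real Set
set_option maxHeartbeats 1600000

lemma integrable_of_tail_bound {f : ℝ → ℝ} (hf : Continuous f)
    {b β R : ℝ} (hb : 0 < b) (hβ : 0 < β) (hR : 1 ≤ R)
    (hbound : ∀ x : ℝ, R ≤ |x| → |f x| ≤ Real.exp (-(b * |x| ^ β))) :
    Integrable f := by
  have hR0 : (0:ℝ) < R := lt_of_lt_of_le one_pos hR
  obtain ⟨n, hn⟩ := exists_nat_ge (2 / β)
  have hβn : (2:ℝ) ≤ β * n := by
    rw [div_le_iff₀ hβ] at hn; linarith [hn]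
  set C : ℝ := (n.factorial : ℝ) / b ^ n with hC
  have hCpos : 0 < C := div_pos (by positivity) (by positivity)
  -- key bound
  have key : ∀ x : ℝ, R ≤ |x| → |f x| ≤ C * |x| ^ (-(2:ℝ)) := by
    intro x hx
    have hx1 : (1:ℝ) ≤ |x| := le_trans hR hx
    have hx0 : (0:ℝ) < |x| := lt_of_lt_of_le one_pos hx1
    have h1 : (b * |x| ^ β) ^ n / n.factorial ≤ Real.exp (b * |x| ^ β) := by
      have := Real.sum_le_exp_of_nonneg (x := b * |x| ^ β) (by positivity) (n + 1)
      refine le_trans ?_ this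
      exact Finset.single_le_sum (f := fun i => (b * |x| ^ β) ^ i / i.factorial)
        (fun i _ => by positivity) (Finset.self_mem_range_succ n)
    have h2 : Real.exp (-(b * |x| ^ β)) ≤ (n.factorial : ℝ) / (b * |x| ^ β) ^ n := by
      rw [Real.exp_neg]
      rw [inv_eq_one_div, div_le_div_iff₀ (Real.exp_pos _) (by positivity), one_mul]
      rw [div_le_iff₀ (by positivity)] at h1
      linarith [h1]
    have h3 : (n.factorial : ℝ) / (b * |x| ^ β) ^ n = C * ((|x| ^ β) ^ n)⁻¹ := by
      rw [mul_pow, hC]; field_simp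
    have h4 : ((|x| ^ β) ^ n)⁻¹ ≤ |x| ^ (-(2:ℝ)) := by
      rw [← Real.rpow_natCast (|x| ^ β) n, ← Real.rpow_mul (abs_nonneg x),
        ← Real.rpow_neg (abs_nonneg x)]
      apply Real.rpow_le_rpow_of_exponent_le hx1
      simp only [neg_le_neg_iff]
      exact hβn
    calc |f x| ≤ Real.exp (-(b * |x| ^ β)) := hbound x hx
      _ ≤ (n.factorial : ℝ) / (b * |x| ^ β) ^ n := h2
      _ = C * ((|x| ^ β) ^ n)⁻¹ := h3
      _ ≤ C * |x| ^ (-(2:ℝ)) := by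
          exact mul_le_mul_of_nonneg_left h4 hCpos.le
  -- integrable on Ici R
  have hIci : IntegrableOn f (Ici R) := by
    rw [integrableOn_Ici_iff_integrableOn_Ioi]
    have hg : IntegrableOn (fun x : ℝ => C * x ^ (-(2:ℝ))) (Ioi R) :=
      (integrableOn_Ioi_rpow_of_lt (by norm_num) hR0).const_mul C
    refine Integrable.mono' hg (hf.aestronglyMeasurable.restrict) ?_
    rw [ae_restrict_iff' measurableSet_Ioi]
    filter_upwards with x hx
    have hxR : R ≤ |x| := by
      rw [abs_of_pos (lt_trans hR0 hx)]; exact le_of_lt hx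
    have := key x hxR
    rwa [Real.norm_eq_abs, abs_of_pos (lt_trans hR0 hx)] at *
  -- integrable on Iic (-R)
  have hIic : IntegrableOn f (Iic (-R)) := by
    have hg : IntegrableOn (fun x : ℝ => f (-x)) (Ici R) := by
      rw [integrableOn_Ici_iff_integrableOn_Ioi]
      have hg0 : IntegrableOn (fun x : ℝ => C * x ^ (-(2:ℝ))) (Ioi R) :=
        (integrableOn_Ioi_rpow_of_lt (by norm_num) hR0).const_mul C
      refine Integrable.mono' hg0 ((hf.comp continuous_neg).aestronglyMeasurable.restrict) ?_
      rw [ae_restrict_iff' measurableSet_Ioi]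
      filter_upwards with x hx
      have hxpos : 0 < x := lt_trans hR0 hx
      have hxR : R ≤ |(-x)| := by rw [abs_neg, abs_of_pos hxpos]; exact le_of_lt hx
      have := key (-x) hxR
      rw [abs_neg, abs_of_pos hxpos] at this
      rwa [Real.norm_eq_abs]
    have h1 : Integrable ((Ici R).indicator (fun x : ℝ => f (-x))) :=
      (integrable_indicator_iff measurableSet_Ici).mpr hg
    have h2 := h1.comp_neg
    have h3 : (fun t : ℝ => (Ici R).indicator (fun x : ℝ => f (-x)) (-t))
        = (Iic (-R)).indicator f := by
      funext t
      by_cases ht : t ≤ -R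
      · rw [Set.indicator_of_mem (show -t ∈ Ici R by simp only [Set.mem_Ici]; linarith),
          Set.indicator_of_mem (by exact ht), neg_neg]
      · rw [Set.indicator_of_notMem (show -t ∉ Ici R by simp only [Set.mem_Ici]; intro h; exact ht (by linarith)),
          Set.indicator_of_notMem (by exact ht)]
    rw [h3] at h2
    exact (integrable_indicator_iff measurableSet_Iic).mp h2
  -- combine
  have hIcc : IntegrableOn f (Icc (-R) R) := hf.integrableOn_Icc
  have : IntegrableOn f (Iic (-R) ∪ (Icc (-R) R ∪ Ici R)) :=
    hIic.union (hIcc.union hIci)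
  rw [← integrableOn_univ]
  refine this.mono_set ?_
  intro x _
  simp only [Set.mem_union, Set.mem_Iic, Set.mem_Icc, Set.mem_Ici]
  by_cases h1 : x ≤ -R
  · exact Or.inl h1
  · by_cases h2 : x ≤ R
    · exact Or.inr (Or.inl ⟨by linarith, h2⟩)
    · exact Or.inr (Or.inr (by linarith))


lemma integrable_expV {V : ℝ → ℝ} (hVc : Continuous V) {η α L₀ : ℝ}
    (hη : 0 < η) (hα : 0 < α) (hL₀ : 1 ≤ L₀)
    (hgrowth : ∀ q : ℝ, L₀ ≤ |q| → η * |q| ^ α ≤ V q)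
    {c : ℝ} (hc : 0 < c) :
    Integrable (fun q : ℝ => Real.exp (-c * V q)) := by
  refine integrable_of_tail_bound
    (Real.continuous_exp.comp (continuous_const.mul hVc))
    (mul_pos hc hη) hα hL₀ (fun x hx => ?_)
  rw [abs_of_pos (Real.exp_pos _)]
  apply Real.exp_le_exp.mpr
  have := hgrowth x hx
  nlinarith [this, hc.le, Real.rpow_nonneg (abs_nonneg x) α]

lemma integrable_rho {η α : ℝ} (hη : 0 < η) (hα : 0 < α) :
    Integrable (fun q : ℝ => Real.exp (-(η * |q| ^ α))) := by
  refine integrable_of_tail_bound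
    (Real.continuous_exp.comp
      ((continuous_const.mul (continuous_abs.rpow_const fun x => Or.inr hα.le)).neg))
    hη hα le_rfl (fun x _ => le_of_eq (abs_of_pos (Real.exp_pos _)))

lemma limsup_gibbs_bound (V : ℝ → ℝ) (hV : ContDiff ℝ (⊤ : ℕ∞) V) (η α L₀ : ℝ)
    (hη : 0 < η) (hα : 0 < α) (hL₀ : 1 ≤ L₀)
    (hgrowth : ∀ q : ℝ, L₀ ≤ |q| → η * |q| ^ α ≤ V q)
    (L : ℝ) (hL : L₀ ≤ L) (ε : ℝ) (hε : 0 < ε) :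
    limsup (fun ν : ℝ =>
        (1 / ν) * Real.log
          (gibbsMeasure V ν (Set.Icc (-L) L ×ˢ Set.Icc (-L) L)ᶜ).toReal) atTop
      ≤ max (-(L ^ 2 / 2)) (-(η * L ^ α) + 2 * ((⨅ q : ℝ, V q) + ε)) := by
  have hVc : Continuous V := hV.continuous
  set m := ⨅ q : ℝ, V q with hm_def
  have hL1 : (1:ℝ) ≤ L := le_trans hL₀ hL
  have hL0 : (0:ℝ) < L := lt_of_lt_of_le one_pos hL1
  -- lower bound for V
  obtain ⟨x₀, hx₀mem, hx₀'⟩ := isCompact_Icc.exists_isMinOn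
    (Set.nonempty_Icc.mpr (by linarith : -L₀ ≤ L₀)) (hVc.continuousOn (s := Icc (-L₀) L₀))
  have hx₀ : ∀ y ∈ Icc (-L₀) L₀, V x₀ ≤ V y := fun y hy => hx₀' hy
  have hbdd : BddBelow (Set.range V) := by
    refine ⟨min (V x₀) 0, ?_⟩
    rintro _ ⟨q, rfl⟩
    by_cases hq : |q| ≤ L₀
    · exact le_trans (min_le_left _ _) (hx₀ q (abs_le.mp hq))
    · push_neg at hq
      refine le_trans (min_le_right _ _) (le_trans ?_ (hgrowth q hq.le))
      positivity
  have hm : ∀ q, m ≤ V q := fun q => ciInf_le hbdd q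
  -- upper bound for V on [0,1]
  obtain ⟨y₀, hy₀mem, hy₀'⟩ := isCompact_Icc.exists_isMaxOn
    (⟨0, by norm_num⟩ : (Icc (0:ℝ) 1).Nonempty) (hVc.continuousOn (s := Icc (0:ℝ) 1))
  have hy₀ : ∀ y ∈ Icc (0:ℝ) 1, V y ≤ V y₀ := fun y hy => hy₀' hy
  set M₁ := V y₀ with hM₁def
  -- interval where V ≤ m + ε
  obtain ⟨q₀, hq₀⟩ : ∃ q₀ : ℝ, V q₀ < m + ε := exists_lt_of_ciInf_lt (by linarith)
  obtain ⟨δ, hδ, hδV⟩ : ∃ δ > 0, ∀ q ∈ Icc (q₀ - δ) (q₀ + δ), V q ≤ m + ε := by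
    have hc : ContinuousAt V q₀ := hVc.continuousAt
    rw [Metric.continuousAt_iff] at hc
    obtain ⟨δ, hδ0, hδ⟩ := hc (m + ε - V q₀) (by linarith)
    refine ⟨δ / 2, by linarith, fun q hq => ?_⟩
    have : dist q q₀ < δ := by
      rw [Real.dist_eq]
      rw [Set.mem_Icc] at hq
      rw [abs_lt]; constructor <;> linarith [hq.1, hq.2]
    have := hδ this
    rw [Real.dist_eq, abs_lt] at this
    linarith [this.1, this.2]
  -- notation
  set gp : ℝ → ℝ → ℝ := fun ν p => Real.exp (-ν * p ^ 2) with hgp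
  set hc : ℝ → ℝ → ℝ := fun c q => Real.exp (-c * V q) with hhc
  set Zp : ℝ → ℝ := fun ν => ∫ p : ℝ, gp ν p with hZp
  set Zq : ℝ → ℝ := fun c => ∫ q : ℝ, hc c q with hZq
  set C₁ : ℝ := ∫ q : ℝ, Real.exp (-(η * |q| ^ α)) with hC₁
  -- basic facts
  have hgInt : ∀ {ν : ℝ}, 0 < ν → Integrable (gp ν) := fun hν => integrable_exp_neg_mul_sq hν
  have hhInt : ∀ {c : ℝ}, 0 < c → Integrable (hc c) :=
    fun hcpos => integrable_expV hVc hη hα hL₀ hgrowth hcpos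
  have hZp_eq : ∀ ν : ℝ, Zp ν = Real.sqrt (π / ν) := fun ν => integral_gaussian ν
  have hZppos : ∀ {ν : ℝ}, 0 < ν → 0 < Zp ν := by
    intro ν hν; rw [hZp_eq]
    exact Real.sqrt_pos.mpr (div_pos Real.pi_pos hν)
  have hZq_lb : ∀ {c : ℝ}, 0 < c → Real.exp (-c * M₁) ≤ Zq c := by
    intro c hcpos
    have h1 : ∫ q in Icc (0:ℝ) 1, Real.exp (-c * M₁) = Real.exp (-c * M₁) := by
      rw [setIntegral_const]; simp [Real.volume_Icc]
    calc Real.exp (-c * M₁) = ∫ q in Icc (0:ℝ) 1, Real.exp (-c * M₁) := h1.symm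
      _ ≤ ∫ q in Icc (0:ℝ) 1, hc c q := by
          refine setIntegral_mono_on ((integrableOn_const_iff ENNReal.coe_ne_top).mpr ?_)
            ((hhInt hcpos).integrableOn) measurableSet_Icc (fun y hy => ?_)
          · right; rw [Real.volume_Icc]; exact ENNReal.ofReal_lt_top
          · exact Real.exp_le_exp.mpr (by nlinarith [hy₀ y hy, hcpos.le])
      _ ≤ Zq c := setIntegral_le_integral (hhInt hcpos)
            (Filter.Eventually.of_forall fun q => (Real.exp_pos _).le)
  have hZqpos : ∀ {c : ℝ}, 0 < c → 0 < Zq c :=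
    fun hcpos => lt_of_lt_of_le (Real.exp_pos _) (hZq_lb hcpos)
  -- the measure formula
  have measure_formula : ∀ {ν : ℝ}, 0 < ν → ∀ (S : Set (ℝ × ℝ)), MeasurableSet S →
      gibbsMeasure V ν S = ENNReal.ofReal ((Zp ν * Zq (2 * ν))⁻¹) *
        ∫⁻ x in S, ENNReal.ofReal (gp ν x.1 * hc (2 * ν) x.2) := by
    intro ν hν S hS
    have hsplit : ∀ x : ℝ × ℝ, Real.exp (-ν * (x.1 ^ 2 + 2 * V x.2))
        = gp ν x.1 * hc (2 * ν) x.2 := by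
      intro x
      rw [hgp, hhc]
      rw [← Real.exp_add]
      congr 1; ring
    have hZeq : (∫ y : ℝ × ℝ, Real.exp (-ν * (y.1 ^ 2 + 2 * V y.2))) = Zp ν * Zq (2 * ν) := by
      simp_rw [hsplit]
      rw [MeasureTheory.Measure.volume_eq_prod, MeasureTheory.integral_prod_mul]
    rw [gibbsMeasure, withDensity_apply _ hS]
    simp_rw [hZeq, hsplit]
    simp_rw [ENNReal.ofReal_mul (inv_nonneg.mpr (mul_pos (hZppos hν) (hZqpos (show (0:ℝ) < 2*ν by linarith))).le)]
    rw [lintegral_const_mul' _ _ ENNReal.ofReal_ne_top]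
  -- rectangle formula
  have rect_formula : ∀ {ν : ℝ}, 0 < ν → ∀ (s t : Set ℝ), MeasurableSet s → MeasurableSet t →
      (∫⁻ x : ℝ × ℝ in s ×ˢ t, ENNReal.ofReal (gp ν x.1 * hc (2 * ν) x.2))
        = ENNReal.ofReal ((∫ p in s, gp ν p) * ∫ q in t, hc (2 * ν) q) := by
    intro ν hν s t hs ht
    rw [MeasureTheory.Measure.volume_eq_prod, ← MeasureTheory.Measure.prod_restrict]
    have hmul : ∀ x : ℝ × ℝ, ENNReal.ofReal (gp ν x.1 * hc (2 * ν) x.2)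
        = ENNReal.ofReal (gp ν x.1) * ENNReal.ofReal (hc (2 * ν) x.2) :=
      fun x => ENNReal.ofReal_mul (Real.exp_pos _).le
    simp_rw [hmul]
    have hfm : AEMeasurable (fun p : ℝ => ENNReal.ofReal (gp ν p)) (volume.restrict s) := by
      apply Measurable.aemeasurable
      apply Measurable.ennreal_ofReal
      rw [hgp]; fun_prop
    have hgm : AEMeasurable (fun q : ℝ => ENNReal.ofReal (hc (2 * ν) q)) (volume.restrict t) := by
      apply Measurable.aemeasurable
      apply Measurable.ennreal_ofReal
      rw [hhc]
      exact (Real.continuous_exp.comp (continuous_const.mul hVc)).measurable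
    rw [MeasureTheory.lintegral_prod_mul hfm hgm]
    rw [← ofReal_integral_eq_lintegral_ofReal ((hgInt hν).integrableOn)
        (Filter.Eventually.of_forall fun p => (Real.exp_pos _).le),
      ← ofReal_integral_eq_lintegral_ofReal ((hhInt (show (0:ℝ) < 2*ν by linarith)).integrableOn)
        (Filter.Eventually.of_forall fun q => (Real.exp_pos _).le),
      ← ENNReal.ofReal_mul (setIntegral_nonneg hs fun p _ => (Real.exp_pos _).le)]
  -- constants
  have hC₁nn : 0 ≤ C₁ := integral_nonneg fun q => (Real.exp_pos _).le
  set Cu : ℝ := Real.sqrt 2 + C₁ / (2 * δ) with hCudef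
  have hCupos : 0 < Cu := by
    have h2 : (0:ℝ) < Real.sqrt 2 := Real.sqrt_pos.mpr two_pos
    have h3 : 0 ≤ C₁ / (2 * δ) := div_nonneg hC₁nn (by linarith)
    rw [hCudef]
    linarith
  set M : ℝ := max (-(L ^ 2 / 2)) (-(η * L ^ α) + 2 * (m + ε)) with hMdef
  set c₀ : ℝ := (Real.sqrt π * Zq 2)⁻¹ * Real.exp (-2 * m) with hc₀def
  have hc₀pos : 0 < c₀ := by
    apply mul_pos (inv_pos.mpr (mul_pos (Real.sqrt_pos.mpr Real.pi_pos) (hZqpos two_pos)))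
      (Real.exp_pos _)
  set w : ℝ := 2 * m - (L + 2) ^ 2 - 2 * M₁ with hwdef
  set K : Set (ℝ × ℝ) := Set.Icc (-L) L ×ˢ Set.Icc (-L) L with hKdef
  have hKmeas : MeasurableSet K := measurableSet_Icc.prod measurableSet_Icc
  set f : ℝ → ℝ := fun ν => (1 / ν) * Real.log ((gibbsMeasure V ν Kᶜ).toReal) with hfdef
  -- key bounds
  have key : ∀ ν : ℝ, 1 ≤ ν →
      c₀ * Real.exp (ν * w) ≤ (gibbsMeasure V ν Kᶜ).toReal ∧
      (gibbsMeasure V ν Kᶜ).toReal ≤ Cu * Real.exp (ν * M) := by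
    intro ν hν1
    have hν : (0:ℝ) < ν := lt_of_lt_of_le one_pos hν1
    have h2ν : (0:ℝ) < 2 * ν := by linarith
    have hZq2ν := hZqpos h2ν
    have hZpν := hZppos hν
    -- notation
    set s : Set ℝ := Set.Icc (-L) L with hsdef
    have hsmeas : MeasurableSet s := measurableSet_Icc
    set Ip : ℝ := ∫ p in sᶜ, gp ν p with hIpdef
    set Iq : ℝ := ∫ q in sᶜ, hc (2 * ν) q with hIqdef
    have hIpnn : 0 ≤ Ip := setIntegral_nonneg hsmeas.compl fun p _ => (Real.exp_pos _).le
    have hIqnn : 0 ≤ Iq := setIntegral_nonneg hsmeas.compl fun q _ => (Real.exp_pos _).le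
    -- upper bound for μ(Kᶜ)
    have hconn : (gibbsMeasure V ν Kᶜ).toReal ≤ Ip / Zp ν + Iq / Zq (2 * ν) := by
      have hsub : Kᶜ ⊆ (sᶜ ×ˢ (univ : Set ℝ)) ∪ ((univ : Set ℝ) ×ˢ sᶜ) := by
        intro x hx
        rw [Set.mem_compl_iff, hKdef, Set.mem_prod] at hx
        push_neg at hx
        by_cases h1 : x.1 ∈ s
        · exact Or.inr ⟨trivial, hx h1⟩
        · exact Or.inl ⟨h1, trivial⟩
      have hJ : (∫⁻ x : ℝ × ℝ in Kᶜ, ENNReal.ofReal (gp ν x.1 * hc (2 * ν) x.2))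
          ≤ ENNReal.ofReal (Ip * Zq (2 * ν)) + ENNReal.ofReal (Zp ν * Iq) := by
        calc (∫⁻ x : ℝ × ℝ in Kᶜ, ENNReal.ofReal (gp ν x.1 * hc (2 * ν) x.2))
            ≤ ∫⁻ x : ℝ × ℝ in (sᶜ ×ˢ (univ : Set ℝ)) ∪ ((univ : Set ℝ) ×ˢ sᶜ),
              ENNReal.ofReal (gp ν x.1 * hc (2 * ν) x.2) := lintegral_mono_set hsub
          _ ≤ (∫⁻ x : ℝ × ℝ in sᶜ ×ˢ (univ : Set ℝ), ENNReal.ofReal (gp ν x.1 * hc (2 * ν) x.2))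
              + ∫⁻ x : ℝ × ℝ in (univ : Set ℝ) ×ˢ sᶜ,
                ENNReal.ofReal (gp ν x.1 * hc (2 * ν) x.2) := lintegral_union_le _ _ _
          _ = ENNReal.ofReal (Ip * Zq (2 * ν)) + ENNReal.ofReal (Zp ν * Iq) := by
              rw [rect_formula hν sᶜ univ hsmeas.compl MeasurableSet.univ,
                rect_formula hν univ sᶜ MeasurableSet.univ hsmeas.compl]
              rw [Measure.restrict_univ]
      have h0 := measure_formula hν Kᶜ hKmeas.compl
      have h1 : gibbsMeasure V ν Kᶜ
          ≤ ENNReal.ofReal ((Zp ν * Zq (2 * ν))⁻¹ * (Ip * Zq (2 * ν) + Zp ν * Iq)) := by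
        rw [h0]
        calc ENNReal.ofReal ((Zp ν * Zq (2 * ν))⁻¹)
              * ∫⁻ x : ℝ × ℝ in Kᶜ, ENNReal.ofReal (gp ν x.1 * hc (2 * ν) x.2)
            ≤ ENNReal.ofReal ((Zp ν * Zq (2 * ν))⁻¹)
              * (ENNReal.ofReal (Ip * Zq (2 * ν)) + ENNReal.ofReal (Zp ν * Iq)) :=
              by gcongr
          _ = ENNReal.ofReal ((Zp ν * Zq (2 * ν))⁻¹ * (Ip * Zq (2 * ν) + Zp ν * Iq)) := by
              rw [← ENNReal.ofReal_add (mul_nonneg hIpnn hZq2ν.le) (mul_nonneg hZpν.le hIqnn),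
                ← ENNReal.ofReal_mul (inv_nonneg.mpr (mul_pos hZpν hZq2ν).le)]
      have heq : (Zp ν * Zq (2 * ν))⁻¹ * (Ip * Zq (2 * ν) + Zp ν * Iq)
          = Ip / Zp ν + Iq / Zq (2 * ν) := by
        field_simp
      rw [heq] at h1
      exact ENNReal.toReal_le_of_le_ofReal
        (add_nonneg (div_nonneg hIpnn hZpν.le) (div_nonneg hIqnn hZq2ν.le)) h1
    -- bound Ip
    have hIp : Ip ≤ Real.sqrt 2 * Real.exp (ν * (-(L ^ 2 / 2))) * Zp ν := by
      have step1 : Ip ≤ ∫ p in sᶜ,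
          Real.exp (ν * (-(L ^ 2 / 2))) * Real.exp (-(ν / 2) * p ^ 2) := by
        refine setIntegral_mono_on ((hgInt hν).integrableOn)
          (((integrable_exp_neg_mul_sq (half_pos hν)).const_mul _).integrableOn)
          hsmeas.compl (fun p hp => ?_)
        have hpL : L < |p| := by
          rw [hsdef, Set.mem_compl_iff, Set.mem_Icc] at hp
          push_neg at hp
          rcases le_or_gt (-L) p with h | h
          · rw [abs_of_nonneg (by linarith [hp h] : 0 ≤ p)]; exact hp h
          · rw [abs_of_neg (by linarith : p < 0)]; linarith
        have hp2 : L ^ 2 ≤ p ^ 2 := by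
          have := sq_abs p
          nlinarith [hpL, hL0]
        rw [hgp, ← Real.exp_add]
        apply Real.exp_le_exp.mpr
        nlinarith [hp2, hν]
      have step2 : (∫ p in sᶜ,
          Real.exp (ν * (-(L ^ 2 / 2))) * Real.exp (-(ν / 2) * p ^ 2))
          = Real.exp (ν * (-(L ^ 2 / 2))) * ∫ p in sᶜ, Real.exp (-(ν / 2) * p ^ 2) := by
        rw [integral_const_mul]
      have step3 : (∫ p in sᶜ, Real.exp (-(ν / 2) * p ^ 2)) ≤ Real.sqrt 2 * Zp ν := by
        calc (∫ p in sᶜ, Real.exp (-(ν / 2) * p ^ 2))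
            ≤ ∫ p : ℝ, Real.exp (-(ν / 2) * p ^ 2) :=
              setIntegral_le_integral (integrable_exp_neg_mul_sq (half_pos hν))
                (Filter.Eventually.of_forall fun p => (Real.exp_pos _).le)
          _ = Real.sqrt (π / (ν / 2)) := integral_gaussian (ν / 2)
          _ = Real.sqrt 2 * Zp ν := by
              rw [hZp_eq ν, ← Real.sqrt_mul (by norm_num : (0:ℝ) ≤ 2)]
              congr 1
              have hν' : ν ≠ 0 := ne_of_gt hν
              field_simp
      calc Ip ≤ Real.exp (ν * (-(L ^ 2 / 2))) * ∫ p in sᶜ, Real.exp (-(ν / 2) * p ^ 2) := by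
            rw [← step2]; exact step1
        _ ≤ Real.exp (ν * (-(L ^ 2 / 2))) * (Real.sqrt 2 * Zp ν) :=
            mul_le_mul_of_nonneg_left step3 (Real.exp_pos _).le
        _ = Real.sqrt 2 * Real.exp (ν * (-(L ^ 2 / 2))) * Zp ν := by ring
    -- bound Iq
    have hIq : Iq ≤ Real.exp (-(ν * (η * L ^ α))) * C₁ := by
      have step1 : Iq ≤ ∫ q in sᶜ,
          Real.exp (-(ν * (η * L ^ α))) * Real.exp (-(η * |q| ^ α)) := by
        refine setIntegral_mono_on ((hhInt h2ν).integrableOn)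
          (((integrable_rho hη hα).const_mul _).integrableOn)
          hsmeas.compl (fun q hq => ?_)
        have hqL : L < |q| := by
          rw [hsdef, Set.mem_compl_iff, Set.mem_Icc] at hq
          push_neg at hq
          rcases le_or_gt (-L) q with h | h
          · rw [abs_of_nonneg (by linarith [hq h] : 0 ≤ q)]; exact hq h
          · rw [abs_of_neg (by linarith : q < 0)]; linarith
        have hVq : η * |q| ^ α ≤ V q := hgrowth q (le_trans hL hqL.le)
        have hA1 : (1:ℝ) ≤ |q| ^ α := by
          rw [show (1:ℝ) = 1 ^ α by rw [Real.one_rpow]]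
          exact Real.rpow_le_rpow (by norm_num) (le_trans hL1 hqL.le) hα.le
        have hAB : L ^ α ≤ |q| ^ α := Real.rpow_le_rpow hL0.le hqL.le hα.le
        rw [hhc, ← Real.exp_add]
        apply Real.exp_le_exp.mpr
        have hAnn : (0:ℝ) ≤ |q| ^ α := Real.rpow_nonneg (abs_nonneg q) α
        have F1 : 2 * ν * (η * |q| ^ α) ≤ 2 * ν * V q :=
          mul_le_mul_of_nonneg_left hVq (by linarith)
        have F2 : ν * η * (L ^ α) ≤ ν * η * (|q| ^ α) :=
          mul_le_mul_of_nonneg_left hAB (by positivity)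
        have F3 : (0:ℝ) ≤ (ν - 1) * (η * |q| ^ α) :=
          mul_nonneg (by linarith) (mul_nonneg hη.le hAnn)
        nlinarith [F1, F2, F3]
      have step2 : (∫ q in sᶜ,
          Real.exp (-(ν * (η * L ^ α))) * Real.exp (-(η * |q| ^ α)))
          = Real.exp (-(ν * (η * L ^ α))) * ∫ q in sᶜ, Real.exp (-(η * |q| ^ α)) := by
        rw [integral_const_mul]
      have step3 : (∫ q in sᶜ, Real.exp (-(η * |q| ^ α))) ≤ C₁ :=
        setIntegral_le_integral (integrable_rho hη hα)
          (Filter.Eventually.of_forall fun q => (Real.exp_pos _).le)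
      calc Iq ≤ Real.exp (-(ν * (η * L ^ α))) * ∫ q in sᶜ, Real.exp (-(η * |q| ^ α)) := by
            rw [← step2]; exact step1
        _ ≤ Real.exp (-(ν * (η * L ^ α))) * C₁ :=
            mul_le_mul_of_nonneg_left step3 (Real.exp_pos _).le
    -- lower bound for Zq (2ν) via δ-interval
    have hZqδ : 2 * δ * Real.exp (-(2 * ν) * (m + ε)) ≤ Zq (2 * ν) := by
      have h1 : ∫ q in Icc (q₀ - δ) (q₀ + δ), Real.exp (-(2 * ν) * (m + ε))
          = 2 * δ * Real.exp (-(2 * ν) * (m + ε)) := by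
        rw [setIntegral_const, Real.volume_real_Icc, smul_eq_mul,
          max_eq_left (by linarith : (0:ℝ) ≤ q₀ + δ - (q₀ - δ))]
        ring_nf
      calc 2 * δ * Real.exp (-(2 * ν) * (m + ε))
          = ∫ q in Icc (q₀ - δ) (q₀ + δ), Real.exp (-(2 * ν) * (m + ε)) := h1.symm
        _ ≤ ∫ q in Icc (q₀ - δ) (q₀ + δ), hc (2 * ν) q := by
            refine setIntegral_mono_on ((integrableOn_const_iff ENNReal.coe_ne_top).mpr ?_)
              ((hhInt h2ν).integrableOn) measurableSet_Icc (fun q hq => ?_)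
            · right; rw [Real.volume_Icc]; exact ENNReal.ofReal_lt_top
            · exact Real.exp_le_exp.mpr (by nlinarith [hδV q hq, h2ν.le])
        _ ≤ Zq (2 * ν) := setIntegral_le_integral (hhInt h2ν)
              (Filter.Eventually.of_forall fun q => (Real.exp_pos _).le)
    -- combine upper
    have hupper : (gibbsMeasure V ν Kᶜ).toReal ≤ Cu * Real.exp (ν * M) := by
      have hA : Ip / Zp ν ≤ Real.sqrt 2 * Real.exp (ν * (-(L ^ 2 / 2))) :=
        (div_le_iff₀ hZpν).mpr hIp
      have hB : Iq / Zq (2 * ν) ≤ C₁ / (2 * δ) * Real.exp (ν * (-(η * L ^ α) + 2 * (m + ε))) := by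
        have hd : 0 < 2 * δ * Real.exp (-(2 * ν) * (m + ε)) := by positivity
        have h2 : Iq / Zq (2 * ν)
            ≤ (Real.exp (-(ν * (η * L ^ α))) * C₁) / (2 * δ * Real.exp (-(2 * ν) * (m + ε))) :=
          div_le_div₀ (mul_nonneg (Real.exp_pos _).le hC₁nn) hIq hd hZqδ
        refine le_trans h2 (le_of_eq ?_)
        rw [show Real.exp (-(ν * (η * L ^ α)))
            = Real.exp (ν * (-(η * L ^ α) + 2 * (m + ε))) * Real.exp (-(2 * ν) * (m + ε)) by
          rw [← Real.exp_add]; congr 1; ring]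
        rw [div_eq_iff (ne_of_gt hd)]
        field_simp
      have hMa : ν * (-(L ^ 2 / 2)) ≤ ν * M :=
        mul_le_mul_of_nonneg_left (le_max_left _ _) hν.le
      have hMb : ν * (-(η * L ^ α) + 2 * (m + ε)) ≤ ν * M :=
        mul_le_mul_of_nonneg_left (le_max_right _ _) hν.le
      calc (gibbsMeasure V ν Kᶜ).toReal ≤ Ip / Zp ν + Iq / Zq (2 * ν) := hconn
        _ ≤ Real.sqrt 2 * Real.exp (ν * M) + C₁ / (2 * δ) * Real.exp (ν * M) := by
            refine add_le_add (le_trans hA ?_) (le_trans hB ?_)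
            · exact mul_le_mul_of_nonneg_left (Real.exp_le_exp.mpr hMa) (Real.sqrt_nonneg 2)
            · exact mul_le_mul_of_nonneg_left (Real.exp_le_exp.mpr hMb)
                (div_nonneg hC₁nn (by linarith))
        _ = Cu * Real.exp (ν * M) := by rw [hCudef]; ring
    -- lower bound
    have hlower : c₀ * Real.exp (ν * w) ≤ (gibbsMeasure V ν Kᶜ).toReal := by
      set S₀ : Set (ℝ × ℝ) := Icc (L + 1) (L + 2) ×ˢ Icc (0:ℝ) 1 with hS₀def
      have hS₀sub : S₀ ⊆ Kᶜ := by
        rintro ⟨p, q⟩ ⟨hp, hq⟩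
        rw [Set.mem_compl_iff, hKdef, Set.mem_prod]
        rw [Set.mem_Icc] at hp
        intro hmem
        have := hmem.1
        rw [Set.mem_Icc] at this
        linarith [hp.1, this.2]
      set Ip₀ : ℝ := ∫ p in Icc (L + 1) (L + 2), gp ν p with hIp₀def
      set Iq₀ : ℝ := ∫ q in Icc (0:ℝ) 1, hc (2 * ν) q with hIq₀def
      have hIp₀ : Real.exp (-ν * (L + 2) ^ 2) ≤ Ip₀ := by
        have h1 : ∫ p in Icc (L + 1) (L + 2), Real.exp (-ν * (L + 2) ^ 2)
            = Real.exp (-ν * (L + 2) ^ 2) := by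
          rw [setIntegral_const, Real.volume_real_Icc, smul_eq_mul,
            max_eq_left (by linarith : (0:ℝ) ≤ L + 2 - (L + 1)),
            show (L + 2 - (L + 1) : ℝ) = 1 by ring, one_mul]
        rw [← h1]
        refine setIntegral_mono_on ((integrableOn_const_iff ENNReal.coe_ne_top).mpr ?_)
          ((hgInt hν).integrableOn) measurableSet_Icc (fun p hp => ?_)
        · right; rw [Real.volume_Icc]; exact ENNReal.ofReal_lt_top
        · rw [Set.mem_Icc] at hp
          apply Real.exp_le_exp.mpr
          have hp2 : p ^ 2 ≤ (L + 2) ^ 2 := by nlinarith [hp.1, hp.2, hL0]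
          nlinarith [mul_le_mul_of_nonneg_left hp2 hν.le]
      have hIq₀ : Real.exp (-(2 * ν) * M₁) ≤ Iq₀ := by
        have h1 : ∫ q in Icc (0:ℝ) 1, Real.exp (-(2 * ν) * M₁)
            = Real.exp (-(2 * ν) * M₁) := by
          rw [setIntegral_const, Real.volume_real_Icc, smul_eq_mul,
            max_eq_left (by norm_num : (0:ℝ) ≤ 1 - 0)]
          norm_num
        rw [← h1]
        refine setIntegral_mono_on ((integrableOn_const_iff ENNReal.coe_ne_top).mpr ?_)
          ((hhInt h2ν).integrableOn) measurableSet_Icc (fun q hq => ?_)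
        · right; rw [Real.volume_Icc]; exact ENNReal.ofReal_lt_top
        · exact Real.exp_le_exp.mpr (by nlinarith [hy₀ q hq, h2ν.le])
      have hIp₀nn : 0 ≤ Ip₀ := le_trans (Real.exp_pos _).le hIp₀
      have hIq₀nn : 0 ≤ Iq₀ := le_trans (Real.exp_pos _).le hIq₀
      -- μ(Kᶜ) is finite
      have hfin : gibbsMeasure V ν Kᶜ ≠ ⊤ := by
        rw [measure_formula hν Kᶜ hKmeas.compl]
        have hle : (∫⁻ x : ℝ × ℝ in Kᶜ, ENNReal.ofReal (gp ν x.1 * hc (2 * ν) x.2))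
            ≤ ENNReal.ofReal (Zp ν * Zq (2 * ν)) := by
          calc (∫⁻ x : ℝ × ℝ in Kᶜ, ENNReal.ofReal (gp ν x.1 * hc (2 * ν) x.2))
              ≤ ∫⁻ x : ℝ × ℝ in (univ : Set ℝ) ×ˢ (univ : Set ℝ),
                ENNReal.ofReal (gp ν x.1 * hc (2 * ν) x.2) := by
                apply lintegral_mono_set
                rw [Set.univ_prod_univ]
                exact Set.subset_univ _
            _ = ENNReal.ofReal ((∫ p : ℝ, gp ν p) * ∫ q : ℝ, hc (2 * ν) q) := by
                rw [rect_formula hν univ univ MeasurableSet.univ MeasurableSet.univ,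
                  Measure.restrict_univ]
            _ = ENNReal.ofReal (Zp ν * Zq (2 * ν)) := rfl
        exact ne_of_lt (lt_of_le_of_lt
          (by gcongr)
          (ENNReal.mul_lt_top ENNReal.ofReal_lt_top ENNReal.ofReal_lt_top))
      have hmono : ENNReal.ofReal ((Zp ν * Zq (2 * ν))⁻¹ * (Ip₀ * Iq₀)) ≤ gibbsMeasure V ν Kᶜ := by
        have hform : gibbsMeasure V ν S₀ = ENNReal.ofReal ((Zp ν * Zq (2 * ν))⁻¹ * (Ip₀ * Iq₀)) := by
          rw [measure_formula hν S₀ (measurableSet_Icc.prod measurableSet_Icc),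
            rect_formula hν _ _ measurableSet_Icc measurableSet_Icc,
            ← ENNReal.ofReal_mul (inv_nonneg.mpr (mul_pos hZpν hZq2ν).le)]
        rw [← hform]
        exact measure_mono hS₀sub
      have htom := ENNReal.toReal_mono hfin hmono
      rw [ENNReal.toReal_ofReal (mul_nonneg (inv_nonneg.mpr (mul_pos hZpν hZq2ν).le)
        (mul_nonneg hIp₀nn hIq₀nn))] at htom
      refine le_trans ?_ htom
      -- bound (Zp ν * Zq (2 ν))⁻¹ * (Ip₀ * Iq₀) from below by c₀ * exp (ν * w)
      have hZpub : Zp ν ≤ Real.sqrt π := by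
        rw [hZp_eq ν]
        apply Real.sqrt_le_sqrt
        rw [div_le_iff₀ hν]
        nlinarith [Real.pi_pos, hν1]
      have hZqub : Zq (2 * ν) ≤ Real.exp (-(2 * (ν - 1)) * m) * Zq 2 := by
        have h1 : (∫ q : ℝ, hc (2 * ν) q)
            ≤ ∫ q : ℝ, Real.exp (-(2 * (ν - 1)) * m) * hc 2 q := by
          refine integral_mono (hhInt h2ν) ((hhInt two_pos).const_mul _) (fun q => ?_)
          rw [hhc]
          simp only
          rw [← Real.exp_add]
          apply Real.exp_le_exp.mpr
          nlinarith [hm q]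
        rw [integral_const_mul] at h1
        exact h1
      have hD : 0 < Real.sqrt π * (Real.exp (-(2 * (ν - 1)) * m) * Zq 2) := by
        apply mul_pos (Real.sqrt_pos.mpr Real.pi_pos)
        exact mul_pos (Real.exp_pos _) (hZqpos two_pos)
      have hinv : (Real.sqrt π * (Real.exp (-(2 * (ν - 1)) * m) * Zq 2))⁻¹
          ≤ (Zp ν * Zq (2 * ν))⁻¹ := by
        apply inv_anti₀ (mul_pos hZpν hZq2ν)
        exact mul_le_mul hZpub hZqub hZq2ν.le (Real.sqrt_nonneg π)
      have heq : (Real.sqrt π * (Real.exp (-(2 * (ν - 1)) * m) * Zq 2))⁻¹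
          * (Real.exp (-ν * (L + 2) ^ 2) * Real.exp (-(2 * ν) * M₁))
          = c₀ * Real.exp (ν * w) := by
        rw [hc₀def, hwdef]
        rw [show Real.sqrt π * (Real.exp (-(2 * (ν - 1)) * m) * Zq 2)
            = (Real.sqrt π * Zq 2) * Real.exp (-(2 * (ν - 1)) * m) by ring]
        rw [mul_inv, show -(2 * (ν - 1)) * m = -(2 * (ν - 1) * m) by ring, Real.exp_neg, inv_inv]
        simp only [mul_assoc, ← Real.exp_add]
        congr 1
        exact Real.exp_eq_exp.mpr (by ring)
      calc c₀ * Real.exp (ν * w)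
          = (Real.sqrt π * (Real.exp (-(2 * (ν - 1)) * m) * Zq 2))⁻¹
            * (Real.exp (-ν * (L + 2) ^ 2) * Real.exp (-(2 * ν) * M₁)) := heq.symm
        _ ≤ (Zp ν * Zq (2 * ν))⁻¹ * (Ip₀ * Iq₀) := by
            apply mul_le_mul hinv _ (by positivity) (inv_nonneg.mpr (mul_pos hZpν hZq2ν).le)
            exact mul_le_mul hIp₀ hIq₀ (Real.exp_pos _).le hIp₀nn
    exact ⟨hlower, hupper⟩
  -- log bounds
  have hev : ∀ᶠ ν : ℝ in atTop, f ν ≤ M + Real.log Cu / ν ∧ w - |Real.log c₀| ≤ f ν := by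
    filter_upwards [eventually_ge_atTop (1:ℝ)] with ν hν1
    have hν : (0:ℝ) < ν := lt_of_lt_of_le one_pos hν1
    obtain ⟨hlo, hup⟩ := key ν hν1
    have htpos : 0 < (gibbsMeasure V ν Kᶜ).toReal :=
      lt_of_lt_of_le (by positivity) hlo
    constructor
    · have hlog : Real.log ((gibbsMeasure V ν Kᶜ).toReal) ≤ Real.log Cu + ν * M := by
        calc Real.log ((gibbsMeasure V ν Kᶜ).toReal)
            ≤ Real.log (Cu * Real.exp (ν * M)) := Real.log_le_log htpos hup
          _ = Real.log Cu + ν * M := by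
              rw [Real.log_mul (ne_of_gt hCupos) (Real.exp_ne_zero _), Real.log_exp]
      have h2 := mul_le_mul_of_nonneg_left hlog (by positivity : (0:ℝ) ≤ 1/ν)
      calc f ν = 1/ν * Real.log ((gibbsMeasure V ν Kᶜ).toReal) := rfl
        _ ≤ 1/ν * (Real.log Cu + ν * M) := h2
        _ = M + Real.log Cu / ν := by field_simp; ring
    · have hlog : Real.log c₀ + ν * w ≤ Real.log ((gibbsMeasure V ν Kᶜ).toReal) := by
        calc Real.log c₀ + ν * w = Real.log (c₀ * Real.exp (ν * w)) := by
              rw [Real.log_mul (ne_of_gt hc₀pos) (Real.exp_ne_zero _), Real.log_exp]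
          _ ≤ Real.log ((gibbsMeasure V ν Kᶜ).toReal) := Real.log_le_log (by positivity) hlo
      have h2 := mul_le_mul_of_nonneg_left hlog (by positivity : (0:ℝ) ≤ 1/ν)
      have h3 : 1/ν * (Real.log c₀ + ν * w) = w + Real.log c₀ / ν := by field_simp; ring
      have h4 : -|Real.log c₀| ≤ Real.log c₀ / ν := by
        have h5 : |Real.log c₀ / ν| ≤ |Real.log c₀| := by
          rw [abs_div, abs_of_pos hν]
          exact div_le_self (abs_nonneg _) hν1
        linarith [neg_abs_le (Real.log c₀ / ν), h5]
      calc w - |Real.log c₀| ≤ w + Real.log c₀ / ν := by linarith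
        _ = 1/ν * (Real.log c₀ + ν * w) := h3.symm
        _ ≤ 1/ν * Real.log ((gibbsMeasure V ν Kᶜ).toReal) := h2
        _ = f ν := rfl
  have hfub : ∀ᶠ ν : ℝ in atTop, f ν ≤ M + Real.log Cu / ν := hev.mono fun _ h => h.1
  have hflb : ∀ᶠ ν : ℝ in atTop, w - |Real.log c₀| ≤ f ν := hev.mono fun _ h => h.2
  have hco : IsCoboundedUnder (· ≤ ·) atTop f :=
    Filter.IsBoundedUnder.isCoboundedUnder_le
      ⟨w - |Real.log c₀|, eventually_map.mpr (hflb.mono fun ν h => h)⟩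
  have hg : Tendsto (fun ν : ℝ => M + Real.log Cu / ν) atTop (nhds M) := by
    have h1 : Tendsto (fun ν : ℝ => Real.log Cu / ν) atTop (nhds 0) :=
      Tendsto.div_atTop tendsto_const_nhds tendsto_id
    simpa using (tendsto_const_nhds (x := M) (f := (atTop : Filter ℝ))).add h1
  calc limsup f atTop ≤ limsup (fun ν : ℝ => M + Real.log Cu / ν) atTop :=
      limsup_le_limsup hfub hco hg.isBoundedUnder_le
    _ = M := hg.limsup_eq

theorem exponential_tightness
    (V : ℝ → ℝ) (hV : ContDiff ℝ (⊤ : ℕ∞) V) (η α L₀ : ℝ)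
    (hη : 0 < η) (hα : 0 < α) (hL₀ : 1 ≤ L₀)
    (hgrowth : ∀ q : ℝ, L₀ ≤ |q| → η * |q| ^ α ≤ V q) :
    (∀ L : ℝ, L₀ ≤ L →
      limsup (fun ν : ℝ =>
          (1 / ν) * Real.log
            (gibbsMeasure V ν (Set.Icc (-L) L ×ˢ Set.Icc (-L) L)ᶜ).toReal) atTop
        ≤ max (-L ^ 2 / 2) (-η * L ^ α - (-2 * ⨅ q : ℝ, V q))) ∧
    Tendsto (fun L : ℝ =>
        limsup (fun ν : ℝ =>
          (1 / ν) * Real.log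
            (gibbsMeasure V ν (Set.Icc (-L) L ×ˢ Set.Icc (-L) L)ᶜ).toReal) atTop)
      atTop atBot := by
  have part1 : ∀ L : ℝ, L₀ ≤ L →
      limsup (fun ν : ℝ =>
          (1 / ν) * Real.log
            (gibbsMeasure V ν (Set.Icc (-L) L ×ˢ Set.Icc (-L) L)ᶜ).toReal) atTop
        ≤ max (-L ^ 2 / 2) (-η * L ^ α - (-2 * ⨅ q : ℝ, V q)) := by
    intro L hL
    refine le_of_forall_pos_le_add fun ε hε => ?_
    have h := limsup_gibbs_bound V hV η α L₀ hη hα hL₀ hgrowth L hL (ε/2) (by linarith)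
    refine le_trans h ?_
    have e1 : -(L ^ 2 / 2) = -L ^ 2 / 2 := by ring
    have e2 : -(η * L ^ α) + 2 * ((⨅ q : ℝ, V q) + ε/2)
        = (-η * L ^ α - (-2 * ⨅ q : ℝ, V q)) + ε := by ring
    rw [e1, e2]
    exact max_le (le_trans (le_max_left _ _) (le_add_of_nonneg_right hε.le))
      (add_le_add_left (le_max_right _ _) ε)
  refine ⟨part1, ?_⟩
  have hbound : Tendsto
      (fun L : ℝ => max (-L ^ 2 / 2) (-η * L ^ α - (-2 * ⨅ q : ℝ, V q))) atTop atBot := by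
    rw [tendsto_atBot]
    intro b
    have h1 : ∀ᶠ L : ℝ in atTop, -L ^ 2 / 2 ≤ b := by
      filter_upwards [eventually_ge_atTop (max 1 (-2*b))] with L hLb
      have hL1 : (1:ℝ) ≤ L := le_trans (le_max_left _ _) hLb
      have hL2 : -2*b ≤ L := le_trans (le_max_right _ _) hLb
      nlinarith
    have h2 : ∀ᶠ L : ℝ in atTop, -η * L ^ α - (-2 * ⨅ q : ℝ, V q) ≤ b := by
      have h3 := (tendsto_rpow_atTop hα).eventually_ge_atTop
        ((2 * (⨅ q : ℝ, V q) - b) / η)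
      filter_upwards [h3] with L hLb
      have := (div_le_iff₀ hη).mp hLb
      linarith
    filter_upwards [h1, h2] with L hb1 hb2 using max_le hb1 hb2
  refine tendsto_atBot_mono' atTop ?_ hbound
  filter_upwards [eventually_ge_atTop L₀] with L hL using part1 L hL
end

section
/- Both roots (possibly complex) of the quadratic equation x² - c x - d = 0 with real coefficients c, d have modulus strictly less than 1 if and only if |c| < 1 - d < 2. -/
/-!
The conditions say that `p(t) = t² - c t - d` is positive at `t = ±1` and that `|d| < 1`.
A real root `t` with `|t| ≥ 1` is excluded by `p(t) ≥ (|t| - 1)(|t| + d)`, and a non-real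
root is one of a conjugate pair with product `-d`, so its squared modulus is `-d < 1`.
Conversely, if `p(1) ≤ 0` then `p` has a real root `≥ 1` (and symmetrically at `-1`), and
`|d|` is the product of the moduli of the two roots.
-/

open ComplexConjugate

section RealQuadratic

variable {c d : ℝ}

theorem exists_root_one_le_of_nonpos (h : 1 - c - d ≤ 0) :
    ∃ t : ℝ, 1 ≤ t ∧ t ^ 2 - c * t - d = 0 := by
  have hΔ : (2 - c) ^ 2 ≤ c ^ 2 + 4 * d := by nlinarith
  have hs : √(c ^ 2 + 4 * d) ^ 2 = c ^ 2 + 4 * d := Real.sq_sqrt ((sq_nonneg _).trans hΔ)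
  have hs_ge : 2 - c ≤ √(c ^ 2 + 4 * d) := (le_abs_self _).trans (Real.abs_le_sqrt hΔ)
  exact ⟨(c + √(c ^ 2 + 4 * d)) / 2, by linarith, by linear_combination hs / 4⟩

theorem sq_sub_mul_sub_pos_of_one_le_abs (hc : |c| < 1 - d) (hd : 1 - d < 2) {t : ℝ}
    (ht : 1 ≤ |t|) : 0 < t ^ 2 - c * t - d := by
  have hct : c * t ≤ |c| * |t| := by rw [← abs_mul]; exact le_abs_self _
  calc 0 ≤ (|t| - 1) * (|t| + d) := mul_nonneg (by linarith) (by linarith)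
    _ = |t| ^ 2 - (1 - d) * |t| - d := by ring
    _ < t ^ 2 - |c| * |t| - d := by rw [sq_abs]; nlinarith
    _ ≤ t ^ 2 - c * t - d := by linarith

end RealQuadratic

namespace Complex

theorem exists_sq_sub_mul_sub_eq_zero (c d : ℂ) : ∃ z : ℂ, z ^ 2 - c * z - d = 0 := by
  obtain ⟨z, hz⟩ :=
    exists_quadratic_eq_zero one_ne_zero (IsAlgClosed.exists_eq_mul_self (discrim 1 (-c) (-d)))
  exact ⟨z, by linear_combination hz⟩

variable {c d : ℝ} {z : ℂ}

theorem normSq_eq_neg_of_sq_sub_mul_sub_eq_zero (hz : z ^ 2 - c * z - d = 0) (him : z.im ≠ 0) :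
    normSq z = -d := by
  have hconj : conj z ^ 2 - c * conj z - d = 0 := by simpa using congrArg conj hz
  have hne : z - conj z ≠ 0 := by simp [sub_conj, him]
  have hconj_eq : conj z = c - z :=
    mul_left_cancel₀ hne (by linear_combination hz - hconj)
  have : z * conj z = -d := by rw [hconj_eq]; linear_combination -hz
  rw [mul_conj] at this
  exact_mod_cast this

theorem norm_lt_one_of_sq_sub_mul_sub_eq_zero (hc : |c| < 1 - d) (hd : 1 - d < 2)
    (hz : z ^ 2 - c * z - d = 0) : ‖z‖ < 1 := by
  by_cases him : z.im = 0
  · have hre : z = z.re := Complex.ext rfl (by simp [him])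
    rw [hre, norm_real, Real.norm_eq_abs]
    by_contra! h
    rw [hre] at hz
    exact (sq_sub_mul_sub_pos_of_one_le_abs hc hd h).ne' (by exact_mod_cast hz)
  · have hsq : ‖z‖ ^ 2 < 1 := by
      rw [Complex.sq_norm, normSq_eq_neg_of_sq_sub_mul_sub_eq_zero hz him]
      linarith [neg_abs_le c]
    exact (sq_lt_one_iff₀ (norm_nonneg z)).mp hsq

theorem one_sub_sub_pos_of_forall_norm_lt_one
    (H : ∀ z : ℂ, z ^ 2 - c * z - d = 0 → ‖z‖ < 1) : 0 < 1 - c - d := by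
  by_contra! h
  obtain ⟨t, ht, hroot⟩ := exists_root_one_le_of_nonpos h
  have := H t (by exact_mod_cast hroot)
  rw [norm_real, Real.norm_eq_abs] at this
  linarith [le_abs_self t]

theorem abs_lt_one_of_forall_norm_lt_one (H : ∀ z : ℂ, z ^ 2 - c * z - d = 0 → ‖z‖ < 1) :
    |d| < 1 := by
  obtain ⟨z, hz⟩ := exists_sq_sub_mul_sub_eq_zero c d
  have hnorm : ‖z‖ * ‖c - z‖ = |d| := by
    rw [← norm_mul, show z * (c - z) = -d by linear_combination -hz]
    simp
  rw [← hnorm]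
  exact mul_lt_one_of_nonneg_of_lt_one_left (norm_nonneg z) (H z hz)
    (H (c - z) (by linear_combination hz)).le

end Complex

theorem quadratic_roots_modulus_lt_one (c d : ℝ) :
    (∀ z : ℂ, z ^ 2 - (c : ℂ) * z - (d : ℂ) = 0 → ‖z‖ < 1) ↔
      (|c| < 1 - d ∧ 1 - d < 2) := by
  constructor
  · intro H
    have hpos_one := Complex.one_sub_sub_pos_of_forall_norm_lt_one H
    have hpos_neg_one : 0 < 1 - (-c) - d :=
      Complex.one_sub_sub_pos_of_forall_norm_lt_one fun z hz => by
        simpa using H (-z) (by push_cast at hz; linear_combination hz)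
    have hd := Complex.abs_lt_one_of_forall_norm_lt_one H
    exact ⟨abs_lt.2 ⟨by linarith, by linarith⟩, by linarith [neg_abs_le d]⟩
  · rintro ⟨hc, hd⟩ z hz
    exact Complex.norm_lt_one_of_sq_sub_mul_sub_eq_zero hc hd hz
end

section
/- Under the same assumption (|a₁₁ - 1 + νh| + |a₁₂ + h| + |a₂₁ - h| + |a₂₂ - 1| = O(h²), ν > 0 fixed), for all sufficiently small h > 0 the matrix A(h) satisfies |tr A(h)| < 1 + det A(h) < 2; equivalently both eigenvalues of A(h) have modulus strictly less than 1. -/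
set_option maxHeartbeats 1000000


theorem spectral_stability
    (ν : ℝ) (hν : 0 < ν) (a11 a12 a21 a22 : ℝ → ℝ)
    (ha : ∃ C > (0:ℝ), ∃ h₀ > (0:ℝ), ∀ h : ℝ, 0 < h → h ≤ h₀ →
      |a11 h - 1 + ν * h| + |a12 h + h| + |a21 h - h| + |a22 h - 1| ≤ C * h ^ 2) :
    ∃ h₀ > (0:ℝ), ∀ h : ℝ, 0 < h → h ≤ h₀ →
      |a11 h + a22 h| < 1 + (a11 h * a22 h - a12 h * a21 h) ∧
      1 + (a11 h * a22 h - a12 h * a21 h) < 2 := by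
  obtain ⟨C, hC, h₀, hh₀, hbd⟩ := ha
  set K : ℝ := C + ν + 1 with hK
  have hKpos : 0 < K := by positivity
  have hCK : C ≤ K := by simp [hK]; linarith
  have hνK : ν ≤ K := by simp [hK]; linarith
  have h1K : 1 ≤ K := by simp [hK]; linarith
  clear_value K
  refine ⟨min h₀ (min (1 / (16 * K ^ 2)) (ν / (16 * K ^ 2))), by positivity, ?_⟩
  intro h hpos hle
  have hle₀ : h ≤ h₀ := le_trans hle (min_le_left _ _)
  have hleK : h ≤ 1 / (16 * K ^ 2) :=
    le_trans hle (le_trans (min_le_right _ _) (min_le_left _ _))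
  have hleν : h ≤ ν / (16 * K ^ 2) :=
    le_trans hle (le_trans (min_le_right _ _) (min_le_right _ _))
  clear hle
  -- basic smallness facts
  have hK2h : K ^ 2 * h ≤ 1 / 16 := by
    have t := mul_le_mul_of_nonneg_left hleK (le_of_lt (by positivity : (0:ℝ) < 16 * K ^ 2))
    rw [mul_div_cancel₀ _ (by positivity : (16 * K ^ 2 : ℝ) ≠ 0)] at t
    nlinarith
  have hK2hν : K ^ 2 * h ≤ ν / 16 := by
    have t := mul_le_mul_of_nonneg_left hleν (le_of_lt (by positivity : (0:ℝ) < 16 * K ^ 2))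
    rw [mul_div_cancel₀ _ (by positivity : (16 * K ^ 2 : ℝ) ≠ 0)] at t
    nlinarith
  have hle1 : h ≤ 1 := by nlinarith
  have hKh : K * h ≤ 1 / 16 := by nlinarith
  have hνh : ν * h ≤ 1 / 16 := by nlinarith
  have h1K2 : 1 ≤ K ^ 2 := by nlinarith
  have hleν16 : h ≤ ν / 16 := by
    have := le_mul_of_one_le_left (le_of_lt hpos) h1K2
    linarith
  -- error bounds
  have hsum := hbd h hpos hle₀
  have hEh : C * h ^ 2 ≤ K * h ^ 2 := by nlinarith
  set e1 := a11 h - 1 + ν * h with he1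
  set e2 := a12 h + h with he2
  set e3 := a21 h - h with he3
  set e4 := a22 h - 1 with he4
  have ha11 : a11 h = 1 - ν * h + e1 := by rw [he1]; ring
  have ha12 : a12 h = -h + e2 := by rw [he2]; ring
  have ha21 : a21 h = h + e3 := by rw [he3]; ring
  have ha22 : a22 h = 1 + e4 := by rw [he4]; ring
  have h1 : |e1| ≤ K * h ^ 2 := by
    have := abs_nonneg e2; have := abs_nonneg e3; have := abs_nonneg e4; linarith
  have h2 : |e2| ≤ K * h ^ 2 := by
    have := abs_nonneg e1; have := abs_nonneg e3; have := abs_nonneg e4; linarith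
  have h3 : |e3| ≤ K * h ^ 2 := by
    have := abs_nonneg e1; have := abs_nonneg e2; have := abs_nonneg e4; linarith
  have h4 : |e4| ≤ K * h ^ 2 := by
    have := abs_nonneg e1; have := abs_nonneg e2; have := abs_nonneg e3; linarith
  clear_value e1 e2 e3 e4
  clear hsum hbd he1 he2 he3 he4
  obtain ⟨e1l, e1r⟩ := abs_le.mp h1
  obtain ⟨e2l, e2r⟩ := abs_le.mp h2
  obtain ⟨e3l, e3r⟩ := abs_le.mp h3
  obtain ⟨e4l, e4r⟩ := abs_le.mp h4
  -- Kh² ≤ h/16 and Kh² ≤ νh/16 and h² ≤ νh/16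
  have hq1 : K * h ^ 2 ≤ h / 16 := by nlinarith
  have hq2 : K * h ^ 2 ≤ ν * h / 16 := by nlinarith
  have hq3 : h ^ 2 ≤ ν * h / 16 := by nlinarith
  have hq4 : K * h ^ 2 ≤ 1 / 16 := by nlinarith
  -- product bounds
  have hhpos : (0:ℝ) ≤ K * h ^ 2 := by positivity
  have pb : ∀ x y : ℝ, |x| ≤ K * h ^ 2 → |y| ≤ K * h ^ 2 →
      |x * y| ≤ h ^ 2 / 256 := by
    intro x y hx hy
    have h1' : |x * y| ≤ (K * h ^ 2) * (K * h ^ 2) := by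
      rw [abs_mul]; exact mul_le_mul hx hy (abs_nonneg _) hhpos
    have h2' : (K * h ^ 2) * (K * h ^ 2) ≤ (h / 16) * (h / 16) :=
      mul_le_mul hq1 hq1 hhpos (by positivity)
    calc |x * y| ≤ (h/16) * (h/16) := le_trans h1' h2'
      _ = h ^ 2 / 256 := by ring
  have p14 := abs_le.mp (pb e1 e4 h1 h4)
  have p23 := abs_le.mp (pb e2 e3 h2 h3)
  have phb : ∀ x : ℝ, |x| ≤ K * h ^ 2 → |h * x| ≤ h ^ 2 / 16 := by
    intro x hx
    rw [abs_mul, abs_of_pos hpos]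
    calc h * |x| ≤ h * (K * h ^ 2) := mul_le_mul_of_nonneg_left hx (le_of_lt hpos)
      _ = (K * h) * h ^ 2 := by ring
      _ ≤ (1/16) * h ^ 2 := mul_le_mul_of_nonneg_right hKh (sq_nonneg h)
      _ = h ^ 2 / 16 := by ring
  have p2 := abs_le.mp (phb e2 h2)
  have p3 := abs_le.mp (phb e3 h3)
  have s1 : ν * K ≤ K ^ 2 := by nlinarith
  have s2 : ν * K * h ≤ 1 / 16 := by
    have := mul_le_mul_of_nonneg_right s1 (le_of_lt hpos)
    linarith
  have p4 : |ν * h * e4| ≤ h ^ 2 / 16 := by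
    rw [abs_mul, abs_of_pos (by positivity : (0:ℝ) < ν * h)]
    calc ν * h * |e4| ≤ ν * h * (K * h ^ 2) :=
          mul_le_mul_of_nonneg_left h4 (by positivity)
      _ = (ν * K * h) * h ^ 2 := by ring
      _ ≤ (1/16) * h ^ 2 := mul_le_mul_of_nonneg_right s2 (sq_nonneg h)
      _ = h ^ 2 / 16 := by ring
  obtain ⟨p4l, p4r⟩ := abs_le.mp p4
  rw [ha11, ha12, ha21, ha22]
  have hh2pos : 0 < h ^ 2 := by positivity
  have hνhpos : 0 < ν * h := by positivity
  constructor
  · rw [abs_lt]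
    constructor
    · linarith [p14.1, p14.2, p23.1, p23.2, p2.1, p2.2, p3.1, p3.2]
    · linarith [p14.1, p14.2, p23.1, p23.2, p2.1, p2.2, p3.1, p3.2]
  · linarith [p14.1, p14.2, p23.1, p23.2, p2.1, p2.2, p3.1, p3.2]
end
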